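/- arXiv:2502.07906 — 8 statements merged into one kernel-verified Lean document; each statement's English description precedes it below -/
import Mathlib

section
/- Let D, Y be square-integrable real random variables and W a random variable with values in a measurable space 𝕎, all defined on a common probability space. Suppose there exist β ∈ ℝ and a measurable function g : 𝕎 → ℝ such that E[Y | σ(D, W)] = β·D + g(W) almost surely (a partially linear model). Then E[(D − E[D | σ(W)])·Y] = β·E[(D − E[D | σ(W)])²]. In particular, if E[(D − E[D | σ(W)])²] > 0, then the ratio E[(D − E[D | σ(W)])·Y] / E[(D − E[D | σ(W)])²] equals β. -/
/-!
Write `V = D - E[D | σ(W)]`. Since `V` is `σ(D, W)`-measurable, pulling it out of the conditional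
expectation gives `E[V Y] = E[V · E[Y | σ(D, W)]] = β E[V D] + E[V g(W)]`. The residual `V` is
orthogonal in `L²` to every `σ(W)`-measurable function, in particular to `g(W)` and to
`E[D | σ(W)]`; hence `E[V g(W)] = 0` and `E[V D] = E[V²]`.
-/

open MeasureTheory

namespace MeasureTheory

variable {Ω : Type*} {m m₀ : MeasurableSpace Ω} {μ : Measure Ω}

theorem integral_mul_condExp_of_stronglyMeasurable (hm : m ≤ m₀) [SigmaFinite (μ.trim hm)]
    {f h : Ω → ℝ} (hh : StronglyMeasurable[m] h) (hhf : Integrable (h * f) μ)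
    (hf : Integrable f μ) :
    ∫ ω, h ω * (μ[f|m]) ω ∂μ = ∫ ω, h ω * f ω ∂μ :=
  calc ∫ ω, h ω * (μ[f|m]) ω ∂μ = ∫ ω, (μ[h * f|m]) ω ∂μ :=
        integral_congr_ae (condExp_mul_of_stronglyMeasurable_left hh hhf hf).symm
    _ = ∫ ω, h ω * f ω ∂μ := integral_condExp hm

variable [IsFiniteMeasure μ]

theorem integral_sub_condExp_mul_eq_zero (hm : m ≤ m₀) {f h : Ω → ℝ} (hf : MemLp f 2 μ)
    (hh : StronglyMeasurable[m] h) (hh2 : MemLp h 2 μ) :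
    ∫ ω, (f ω - (μ[f|m]) ω) * h ω ∂μ = 0 := by
  have hfh : Integrable (fun ω => h ω * f ω) μ := hh2.integrable_mul hf
  have hcondh : Integrable (fun ω => h ω * (μ[f|m]) ω) μ :=
    hh2.integrable_mul (hf.condExp one_le_two)
  calc ∫ ω, (f ω - (μ[f|m]) ω) * h ω ∂μ
      = ∫ ω, (h ω * f ω - h ω * (μ[f|m]) ω) ∂μ := by congr 1; ext ω; ring
    _ = 0 := by
      rw [integral_sub hfh hcondh, integral_mul_condExp_of_stronglyMeasurable hm hh hfh
        (hf.integrable one_le_two), sub_self]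

theorem integral_sub_condExp_mul_self (hm : m ≤ m₀) {f : Ω → ℝ} (hf : MemLp f 2 μ) :
    ∫ ω, (f ω - (μ[f|m]) ω) * f ω ∂μ = ∫ ω, (f ω - (μ[f|m]) ω) ^ 2 ∂μ := by
  have hcond2 : MemLp (μ[f|m]) 2 μ := hf.condExp one_le_two
  have hr2 : MemLp (f - μ[f|m]) 2 μ := hf.sub hcond2
  have hsq : Integrable (fun ω => (f ω - (μ[f|m]) ω) ^ 2) μ := hr2.integrable_sq
  have hcross : Integrable (fun ω => (f ω - (μ[f|m]) ω) * (μ[f|m]) ω) μ :=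
    hr2.integrable_mul hcond2
  calc ∫ ω, (f ω - (μ[f|m]) ω) * f ω ∂μ
      = ∫ ω, ((f ω - (μ[f|m]) ω) ^ 2 + (f ω - (μ[f|m]) ω) * (μ[f|m]) ω) ∂μ := by
        congr 1; ext ω; ring
    _ = ∫ ω, (f ω - (μ[f|m]) ω) ^ 2 ∂μ := by
        rw [integral_add hsq hcross,
          integral_sub_condExp_mul_eq_zero hm hf stronglyMeasurable_condExp hcond2, add_zero]

/-- Robinson's partialling-out identity, in population form. -/
theorem integral_sub_condExp_mul_eq_of_condExp_eq_add {m' : MeasurableSpace Ω} (hmm' : m ≤ m')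
    (hm' : m' ≤ m₀) {f y k : Ω → ℝ} {β : ℝ} (hf : StronglyMeasurable[m'] f) (hf2 : MemLp f 2 μ)
    (hy2 : MemLp y 2 μ) (hk : StronglyMeasurable[m] k)
    (hmodel : μ[y|m'] =ᵐ[μ] fun ω => β * f ω + k ω) :
    ∫ ω, (f ω - (μ[f|m]) ω) * y ω ∂μ = β * ∫ ω, (f ω - (μ[f|m]) ω) ^ 2 ∂μ := by
  have hm : m ≤ m₀ := hmm'.trans hm'
  have hr2 : MemLp (f - μ[f|m]) 2 μ := hf2.sub (hf2.condExp one_le_two)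
  have hr : StronglyMeasurable[m'] (f - μ[f|m]) :=
    hf.sub ((stronglyMeasurable_condExp (m := m) (f := f) (μ := μ)).mono hmm')
  have hk2 : MemLp k 2 μ := by
    refine ((hy2.condExp (m := m') one_le_two).sub (hf2.const_mul β)).ae_eq ?_
    filter_upwards [hmodel] with ω hω
    simp [hω]
  have hrf : Integrable (fun ω => β * ((f ω - (μ[f|m]) ω) * f ω)) μ :=
    (hr2.integrable_mul hf2).const_mul β
  have hrk : Integrable (fun ω => (f ω - (μ[f|m]) ω) * k ω) μ := hr2.integrable_mul hk2
  calc ∫ ω, (f ω - (μ[f|m]) ω) * y ω ∂μ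
      = ∫ ω, (f ω - (μ[f|m]) ω) * (μ[y|m']) ω ∂μ :=
        (integral_mul_condExp_of_stronglyMeasurable hm' hr (hr2.integrable_mul hy2)
          (hy2.integrable one_le_two)).symm
    _ = ∫ ω, (β * ((f ω - (μ[f|m]) ω) * f ω) + (f ω - (μ[f|m]) ω) * k ω) ∂μ := by
        refine integral_congr_ae ?_
        filter_upwards [hmodel] with ω hω
        rw [hω]
        ring
    _ = β * ∫ ω, (f ω - (μ[f|m]) ω) ^ 2 ∂μ := by
        rw [integral_add hrf hrk, integral_const_mul, integral_sub_condExp_mul_self hm hf2,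
          integral_sub_condExp_mul_eq_zero hm hf2 hk hk2, add_zero]

end MeasureTheory

theorem partially_linear_identification_general
    {Ω 𝕎 : Type*} [mΩ : MeasurableSpace Ω] [MeasurableSpace 𝕎]
    (P : Measure Ω) [IsProbabilityMeasure P]
    (D Y : Ω → ℝ) (W : Ω → 𝕎)
    (hD : Measurable D) (hW : Measurable W)
    (hD2 : MemLp D 2 P) (hY2 : MemLp Y 2 P)
    (β : ℝ) (g : 𝕎 → ℝ) (hg : Measurable g)
    (hmodel : P[Y|MeasurableSpace.comap (fun ω => (D ω, W ω)) inferInstance]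
      =ᵐ[P] fun ω => β * D ω + g (W ω)) :
    (∫ ω, (D ω - (P[D|MeasurableSpace.comap W inferInstance]) ω) * Y ω ∂P
      = β * ∫ ω, (D ω - (P[D|MeasurableSpace.comap W inferInstance]) ω) ^ 2 ∂P) ∧
    (0 < ∫ ω, (D ω - (P[D|MeasurableSpace.comap W inferInstance]) ω) ^ 2 ∂P →
      (∫ ω, (D ω - (P[D|MeasurableSpace.comap W inferInstance]) ω) * Y ω ∂P)
        / (∫ ω, (D ω - (P[D|MeasurableSpace.comap W inferInstance]) ω) ^ 2 ∂P) = β) := by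
  have hDW : Measurable[MeasurableSpace.comap (fun ω => (D ω, W ω)) inferInstance]
      (fun ω => (D ω, W ω)) := comap_measurable _
  have hWle : MeasurableSpace.comap W inferInstance
      ≤ MeasurableSpace.comap (fun ω => (D ω, W ω)) inferInstance :=
    (measurable_snd.comp hDW).comap_le
  have hDmeas : StronglyMeasurable[MeasurableSpace.comap (fun ω => (D ω, W ω)) inferInstance] D :=
    (measurable_fst.comp hDW).stronglyMeasurable
  have key := integral_sub_condExp_mul_eq_of_condExp_eq_add hWle (hD.prodMk hW).comap_le
    hDmeas hD2 hY2 (hg.comp (comap_measurable W)).stronglyMeasurable hmodel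
  refine ⟨key, fun hpos => ?_⟩
  rw [key, mul_div_assoc, div_self hpos.ne', mul_one]

/-- In a partially linear model `E[Y | σ(D, W)] = β·D + g(W)`, the expected conditional
covariance identity `E[(D − E[D|σ(W)])·Y] = β·E[(D − E[D|σ(W)])²]` holds; in particular,
if the denominator is positive, the ratio identifies `β`. -/
theorem partially_linear_identification
    {Ω 𝕎 : Type*} [mΩ : MeasurableSpace Ω] [MeasurableSpace 𝕎]
    (P : Measure Ω) [IsProbabilityMeasure P]
    (D Y : Ω → ℝ) (W : Ω → 𝕎)
    (hD : Measurable D) (hY : Measurable Y) (hW : Measurable W)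
    (hD2 : MemLp D 2 P) (hY2 : MemLp Y 2 P)
    (β : ℝ) (g : 𝕎 → ℝ) (hg : Measurable g)
    (hmodel : P[Y|MeasurableSpace.comap (fun ω => (D ω, W ω)) inferInstance]
      =ᵐ[P] fun ω => β * D ω + g (W ω)) :
    (∫ ω, (D ω - (P[D|MeasurableSpace.comap W inferInstance]) ω) * Y ω ∂P
      = β * ∫ ω, (D ω - (P[D|MeasurableSpace.comap W inferInstance]) ω) ^ 2 ∂P) ∧
    (0 < ∫ ω, (D ω - (P[D|MeasurableSpace.comap W inferInstance]) ω) ^ 2 ∂P →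
      (∫ ω, (D ω - (P[D|MeasurableSpace.comap W inferInstance]) ω) * Y ω ∂P)
        / (∫ ω, (D ω - (P[D|MeasurableSpace.comap W inferInstance]) ω) ^ 2 ∂P) = β) :=
  partially_linear_identification_general (mΩ := mΩ) P D Y W hD hW hD2 hY2 β g hg hmodel
end

section
/- Assume positivity and let 𝒵 ⊆ σ(W) be a sub-σ-algebra. Then the following are equivalent: (a) σ(Y) and σ(W) are conditionally independent given σ(T) ∨ 𝒵 (i.e., 𝒵 is outcome distribution sufficient); (b) for every t ∈ 𝕋 and every y ∈ ℝ there exists a 𝒵-measurable function g : Ω → ℝ with F(y | t, W) = g almost surely. Moreover, the implication (b) ⇒ (a) holds without the positivity assumption. -/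
open MeasureTheory ProbabilityTheory

noncomputable section

/-- The real-valued indicator of the event `{T = t}`. -/
def indT {Ω 𝕋 : Type*} (T : Ω → 𝕋) (t : 𝕋) : Ω → ℝ :=
  ({ω | T ω = t}).indicator fun _ => 1

/-- The propensity `π_t(𝒵) = E[1{T = t} | 𝒵]`. -/
def piZ {Ω 𝕋 : Type*} {mΩ : MeasurableSpace Ω} (P : Measure Ω) (T : Ω → 𝕋)
    (𝒵 : MeasurableSpace Ω) (t : 𝕋) : Ω → ℝ :=
  P[indT T t|𝒵]

/-- The outcome regression `b_t(𝒵) = E[Y·1{T = t} | 𝒵] / π_t(𝒵)`. -/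
def bZ {Ω 𝕋 : Type*} {mΩ : MeasurableSpace Ω} (P : Measure Ω) (T : Ω → 𝕋) (Y : Ω → ℝ)
    (𝒵 : MeasurableSpace Ω) (t : 𝕋) : Ω → ℝ :=
  fun ω => (P[fun ω' => Y ω' * indT T t ω'|𝒵]) ω / piZ P T 𝒵 t ω

/-- The adjusted mean `χ_t(𝒵) = E[b_t(𝒵)]`. -/
def chiZ {Ω 𝕋 : Type*} {mΩ : MeasurableSpace Ω} (P : Measure Ω) (T : Ω → 𝕋) (Y : Ω → ℝ)
    (𝒵 : MeasurableSpace Ω) (t : 𝕋) : ℝ :=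
  ∫ ω, bZ P T Y 𝒵 t ω ∂P

/-- The influence function `ψ_t(𝒵) = b_t(𝒵) + (1{T=t}/π_t(𝒵))·(Y − b_t(𝒵)) − χ_t(𝒵)`. -/
def psiZ {Ω 𝕋 : Type*} {mΩ : MeasurableSpace Ω} (P : Measure Ω) (T : Ω → 𝕋) (Y : Ω → ℝ)
    (𝒵 : MeasurableSpace Ω) (t : 𝕋) : Ω → ℝ :=
  fun ω => bZ P T Y 𝒵 t ω + indT T t ω / piZ P T 𝒵 t ω * (Y ω - bZ P T Y 𝒵 t ω)
    - chiZ P T Y 𝒵 t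

/-- The efficiency bound `V_Δ(𝒵) = Var(Σ_t c_t·ψ_t(𝒵))`. -/
def VDelta {Ω 𝕋 : Type*} {mΩ : MeasurableSpace Ω} [Fintype 𝕋] (P : Measure Ω) (T : Ω → 𝕋)
    (Y : Ω → ℝ) (c : 𝕋 → ℝ) (𝒵 : MeasurableSpace Ω) : ℝ :=
  variance (fun ω => ∑ t, c t * psiZ P T Y 𝒵 t ω) P

end

noncomputable section

/-- The real-valued indicator of the event `{Y ≤ y}`. -/
def indLE {Ω : Type*} (Y : Ω → ℝ) (y : ℝ) : Ω → ℝ :=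
  ({ω | Y ω ≤ y}).indicator fun _ => 1

/-- The conditional distribution function `F(y | t, W)` derived from a regular conditional
distribution `κ` of `Y` given `(T, W)`. -/
def Fcdf {Ω 𝕎 𝕋 : Type*} [MeasurableSpace 𝕎] [MeasurableSpace 𝕋]
    (κ : Kernel (𝕋 × 𝕎) ℝ) (W : Ω → 𝕎) (t : 𝕋) (y : ℝ) : Ω → ℝ :=
  fun ω => (κ (t, W ω) (Set.Iic y)).toReal

end

/-!
Write `𝒢 = σ(T) ⊔ 𝒵`. Since `𝒵 ≤ σ(W)`, we have `𝒢 ⊔ σ(W) = σ(T, W)`, and `σ(Y) ⫫ σ(W) | 𝒢`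
is equivalent to `P(Y ≤ y | σ(T, W))` being a.e. `𝒢`-measurable for every `y` (π-λ arguments
over the sets `{Y ≤ y}` and over the rectangles `a ∩ b` with `a ∈ 𝒢`, `b ∈ σ(W)`). By the kernel
hypothesis, `P(Y ≤ y | σ(T, W)) = F(y | T, W)`.

A `σ(T) ⊔ 𝒵`-measurable function factors as `ω ↦ H (T ω) ω` with every `H t` `𝒵`-measurable.
For (b) ⇒ (a), glue the `𝒵`-measurable versions of `F(y | t, W)` along `T`. For (a) ⇒ (b),
`F(y | t, W)` agrees with `H t` a.e. on `{T = t}`; both are `σ(W)`-measurable, and a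
`σ(W)`-event that meets `{T = t}` only in a null set is null because `P(T = t | W) > 0`.
-/

open MeasurableSpace

theorem MeasurableSpace.sup_eq_generateFrom_inter {α : Type*} (m₁ m₂ : MeasurableSpace α) :
    m₁ ⊔ m₂ = generateFrom
      (Set.image2 (· ∩ ·) {s | MeasurableSet[m₁] s} {t | MeasurableSet[m₂] t}) := by
  refine le_antisymm (sup_le ?_ ?_) (generateFrom_le ?_)
  · exact fun s hs => measurableSet_generateFrom ⟨s, hs, Set.univ, .univ, Set.inter_univ s⟩
  · exact fun t ht => measurableSet_generateFrom ⟨Set.univ, .univ, t, ht, Set.univ_inter t⟩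
  · rintro _ ⟨s, hs, t, ht, rfl⟩
    exact (le_sup_left (b := m₂) s hs).inter (le_sup_right (a := m₁) t ht)

theorem MeasurableSpace.isPiSystem_image2_inter {α : Type*} (m₁ m₂ : MeasurableSpace α) :
    IsPiSystem (Set.image2 (· ∩ ·) {s | MeasurableSet[m₁] s} {t | MeasurableSet[m₂] t}) := by
  rintro _ ⟨s₁, hs₁, t₁, ht₁, rfl⟩ _ ⟨s₂, hs₂, t₂, ht₂, rfl⟩ -
  exact ⟨s₁ ∩ s₂, hs₁.inter hs₂, t₁ ∩ t₂, ht₁.inter ht₂, Set.inter_inter_inter_comm _ _ _ _⟩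

theorem Measurable.exists_eq_apply_of_comap_sup {Ω β : Type*} {mβ : MeasurableSpace β}
    {𝒵 : MeasurableSpace Ω} {T : Ω → β} {h : Ω → ℝ} (hh : Measurable[mβ.comap T ⊔ 𝒵] h) :
    ∃ H : β → Ω → ℝ, (∀ b, Measurable[𝒵] (H b)) ∧ ∀ ω, h ω = H (T ω) ω := by
  rw [← comap_id (m := 𝒵), ← comap_prodMk] at hh
  obtain ⟨H, hH, rfl⟩ := hh.exists_eq_measurable_comp
  exact ⟨fun b ω => H (b, ω), fun b => hH.comp measurable_prodMk_left, fun _ => rfl⟩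

theorem measurable_comap_sup_apply {Ω β : Type*} [mβ : MeasurableSpace β] [Countable β]
    [MeasurableSingletonClass β] {𝒵 : MeasurableSpace Ω} {T : Ω → β} {H : β → Ω → ℝ}
    (hH : ∀ b, Measurable[𝒵] (H b)) : Measurable[mβ.comap T ⊔ 𝒵] (fun ω => H (T ω) ω) := by
  rw [← comap_id (m := 𝒵), ← comap_prodMk]
  exact (measurable_from_prod_countable_right (f := fun p : β × Ω => H p.1 p.2) hH).comp
    (comap_measurable _)

theorem Set.indicator_eq_indicator_one_mul {α M : Type*} [MulZeroOneClass M] (s : Set α)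
    (f : α → M) : s.indicator f = (s.indicator fun _ => 1) * f := by
  ext a
  by_cases ha : a ∈ s <;> simp [ha]

theorem setIntegral_eq_of_isPiSystem {α E : Type*} [NormedAddCommGroup E] [NormedSpace ℝ E]
    {m m₀ : MeasurableSpace α} {μ : Measure α} {f g : α → E} (hm : m ≤ m₀)
    {p : Set (Set α)} (h_gen : m = generateFrom p) (hp : IsPiSystem p)
    (hf : Integrable f μ) (hg : Integrable g μ) (h_univ : ∫ x, f x ∂μ = ∫ x, g x ∂μ)
    (h_basic : ∀ s ∈ p, ∫ x in s, f x ∂μ = ∫ x in s, g x ∂μ)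
    {s : Set α} (hs : MeasurableSet[m] s) : ∫ x in s, f x ∂μ = ∫ x in s, g x ∂μ := by
  induction s, hs using induction_on_inter h_gen hp with
  | empty => simp
  | basic s hs => exact h_basic s hs
  | compl s hs ih =>
    rw [setIntegral_compl (hm s hs) hf, setIntegral_compl (hm s hs) hg, ih, h_univ]
  | iUnion s hd hs ih =>
    rw [integral_iUnion (fun i => hm _ (hs i)) hd hf.integrableOn,
      integral_iUnion (fun i => hm _ (hs i)) hd hg.integrableOn]
    exact tsum_congr ih

namespace ProbabilityTheory

variable {Ω : Type*} {m' m₁ m₂ mΩ : MeasurableSpace Ω} [StandardBorelSpace Ω]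
  {μ : Measure Ω} [IsFiniteMeasure μ]

theorem CondIndep.condExp_indicator_sup_ae_eq {hm' : m' ≤ mΩ} (h : CondIndep m' m₁ m₂ hm' μ)
    (hm₁ : m₁ ≤ mΩ) (hm₂ : m₂ ≤ mΩ) {s : Set Ω} (hs : MeasurableSet[m₁] s) :
    μ⟦s | m' ⊔ m₂⟧ =ᵐ[μ] μ⟦s | m'⟧ := by
  have hsΩ : MeasurableSet[mΩ] s := hm₁ s hs
  have hint : Integrable (s.indicator fun _ => (1 : ℝ)) μ := (integrable_const 1).indicator hsΩ
  have hprod := (condIndep_iff m' m₁ m₂ hm' hm₁ hm₂ μ).mp h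
  refine (ae_eq_condExp_of_forall_setIntegral_eq (sup_le hm' hm₂) hint
    (fun _ _ _ => integrable_condExp.integrableOn) (fun c hc _ => ?_)
    (stronglyMeasurable_condExp.aestronglyMeasurable.mono le_sup_left)).symm
  refine setIntegral_eq_of_isPiSystem (sup_le hm' hm₂) (sup_eq_generateFrom_inter m' m₂)
    (isPiSystem_image2_inter m' m₂) integrable_condExp hint (integral_condExp hm') ?_ hc
  rintro _ ⟨a, ha, b, hb, rfl⟩
  have hbΩ : MeasurableSet[mΩ] b := hm₂ b hb
  have hint_b : Integrable ((b.indicator fun _ => 1) * μ⟦s | m'⟧) μ := by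
    rw [← Set.indicator_eq_indicator_one_mul]
    exact integrable_condExp.indicator hbΩ
  calc ∫ ω in a ∩ b, (μ⟦s | m'⟧) ω ∂μ
      = ∫ ω in a, ((b.indicator fun _ => 1) * μ⟦s | m'⟧ : Ω → ℝ) ω ∂μ := by
        rw [← Set.indicator_eq_indicator_one_mul, setIntegral_indicator hbΩ]
    _ = ∫ ω in a, (μ[(b.indicator fun _ => 1) * μ⟦s | m'⟧ | m']) ω ∂μ :=
        (setIntegral_condExp hm' hint_b ha).symm
    _ = ∫ ω in a, (μ⟦b | m'⟧ * μ⟦s | m'⟧) ω ∂μ :=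
        setIntegral_congr_ae (hm' a ha) <| Filter.Eventually.mono
          (condExp_mul_of_stronglyMeasurable_right stronglyMeasurable_condExp hint_b
            ((integrable_const 1).indicator hbΩ)) fun ω hω _ => hω
    _ = ∫ ω in a, (μ⟦s ∩ b | m'⟧) ω ∂μ := by
        refine setIntegral_congr_ae (hm' a ha) ((hprod s b hs hb).mono fun ω hω _ => ?_)
        rw [hω, Pi.mul_apply, Pi.mul_apply, mul_comm]
    _ = ∫ ω in a ∩ b, s.indicator (fun _ => (1 : ℝ)) ω ∂μ := by
        rw [setIntegral_condExp hm' ((integrable_const 1).indicator (hsΩ.inter hbΩ)) ha,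
          Set.inter_comm, ← Set.indicator_indicator, setIntegral_indicator hbΩ]

theorem condIndep_of_aestronglyMeasurable_condExp_sup {hm' : m' ≤ mΩ} (hm₁ : m₁ ≤ mΩ)
    (hm₂ : m₂ ≤ mΩ) {p : Set (Set Ω)} (hp : IsPiSystem p) (h_gen : m₁ = generateFrom p)
    (h : ∀ s ∈ p, AEStronglyMeasurable[m'] (μ⟦s | m' ⊔ m₂⟧) μ) :
    CondIndep m' m₁ m₂ hm' μ := by
  have hpΩ : ∀ s ∈ p, MeasurableSet[mΩ] s :=
    fun s hs => hm₁ s (h_gen ▸ measurableSet_generateFrom hs)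
  refine CondIndepSets.condIndep (p2 := {t | MeasurableSet[m₂] t}) hm₁ hm₂ hp
    (fun _ hs _ ht _ => @MeasurableSet.inter Ω m₂ _ _ hs ht) h_gen
    (@generateFrom_measurableSet Ω m₂).symm ?_
  refine (condIndepSets_iff _ _ _ _ hpΩ (fun t ht => hm₂ t ht) μ).mpr fun s t hs ht => ?_
  have hsup : m' ⊔ m₂ ≤ mΩ := sup_le hm' hm₂
  have hsΩ := hpΩ s hs
  have htΩ : MeasurableSet[mΩ] t := hm₂ t ht
  have hφ : μ⟦s | m' ⊔ m₂⟧ =ᵐ[μ] μ⟦s | m'⟧ :=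
    (condExp_of_aestronglyMeasurable' hm' (h s hs) integrable_condExp).symm.trans
      (condExp_condExp_of_le le_sup_left hsup)
  have hint_t : Integrable (t.indicator fun _ => (1 : ℝ)) μ := (integrable_const 1).indicator htΩ
  calc μ⟦s ∩ t | m'⟧
      =ᵐ[μ] μ[μ[(t.indicator fun _ => 1) * s.indicator (fun _ => 1) | m' ⊔ m₂] | m'] := by
        rw [Set.inter_comm, ← Set.indicator_indicator, Set.indicator_eq_indicator_one_mul]
        exact (condExp_condExp_of_le le_sup_left hsup).symm
    _ =ᵐ[μ] μ[(t.indicator fun _ => 1) * μ⟦s | m' ⊔ m₂⟧ | m'] := by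
        refine condExp_congr_ae (condExp_mul_of_stronglyMeasurable_left ?_ ?_ ?_)
        · exact (measurable_const.indicator (le_sup_right (a := m') t ht)).stronglyMeasurable
        · rw [← Set.indicator_eq_indicator_one_mul]
          exact ((integrable_const 1).indicator hsΩ).indicator htΩ
        · exact (integrable_const 1).indicator hsΩ
    _ =ᵐ[μ] μ⟦t | m'⟧ * μ⟦s | m' ⊔ m₂⟧ := by
        refine condExp_mul_of_aestronglyMeasurable_right (h s hs) ?_ hint_t
        rw [← Set.indicator_eq_indicator_one_mul]
        exact integrable_condExp.indicator htΩ
    _ =ᵐ[μ] μ⟦s | m'⟧ * μ⟦t | m'⟧ := by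
        filter_upwards [hφ] with ω hω
        rw [Pi.mul_apply, Pi.mul_apply, hω, mul_comm]

end ProbabilityTheory

theorem ae_of_ae_mem_imp_of_condExp_pos {Ω : Type*} {m mΩ : MeasurableSpace Ω}
    {μ : Measure Ω} [IsFiniteMeasure μ] {s : Set Ω} (hs : MeasurableSet s)
    {p : Ω → Prop} (hp : MeasurableSet[m] {ω | p ω}) (hpos : ∀ᵐ ω ∂μ, 0 < (μ⟦s | m⟧) ω)
    (h : ∀ᵐ ω ∂μ, ω ∈ s → p ω) : ∀ᵐ ω ∂μ, p ω := by
  set D := {ω | p ω}ᶜ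
  have hDs : μ (D ∩ s) = 0 := by
    rw [← ae_iff.mp h]
    congr 1
    ext ω
    simp [D, and_comm]
  have hzero : D.indicator (μ⟦s | m⟧) =ᵐ[μ] 0 := calc
    D.indicator (μ⟦s | m⟧)
      =ᵐ[μ] μ[D.indicator (s.indicator fun _ => (1 : ℝ)) | m] :=
        (condExp_indicator ((integrable_const 1).indicator hs) hp.compl).symm
    _ =ᵐ[μ] μ[0 | m] := by
        rw [Set.indicator_indicator]
        exact condExp_congr_ae (indicator_meas_zero hDs)
    _ = 0 := condExp_zero
  filter_upwards [hzero, hpos] with ω hω hωpos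
  by_contra hnot
  rw [Set.indicator_of_mem (show ω ∈ D from hnot)] at hω
  exact hωpos.ne' hω

theorem comap_eq_generateFrom_preimage_Iic {Ω : Type*} (Y : Ω → ℝ) :
    MeasurableSpace.comap Y inferInstance = generateFrom ((Y ⁻¹' ·) '' Set.range Set.Iic) := by
  rw [BorelSpace.measurable_eq (α := ℝ), borel_eq_generateFrom_Iic, comap_generateFrom]

theorem comap_sup_sup_comap_eq_comap_prodMk {Ω 𝕎 𝕋 : Type*} [MeasurableSpace 𝕎]
    [MeasurableSpace 𝕋] {T : Ω → 𝕋} {W : Ω → 𝕎} {𝒵 : MeasurableSpace Ω}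
    (h𝒵W : 𝒵 ≤ MeasurableSpace.comap W inferInstance) :
    MeasurableSpace.comap T inferInstance ⊔ 𝒵 ⊔ MeasurableSpace.comap W inferInstance =
      MeasurableSpace.comap (fun ω => (T ω, W ω)) inferInstance := by
  rw [sup_assoc, sup_eq_right.mpr h𝒵W]
  exact (comap_prodMk T W).symm

theorem measurable_Fcdf_comap {Ω 𝕎 𝕋 : Type*} [MeasurableSpace 𝕎] [MeasurableSpace 𝕋]
    (κ : Kernel (𝕋 × 𝕎) ℝ) (W : Ω → 𝕎) (t : 𝕋) (y : ℝ) :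
    Measurable[MeasurableSpace.comap W inferInstance] (Fcdf κ W t y) :=
  ((κ.measurable_coe measurableSet_Iic).comp measurable_prodMk_left).ennreal_toReal.comp
    (comap_measurable W)

section OutcomeDistribution

variable {Ω 𝕎 𝕋 : Type*} [mΩ : MeasurableSpace Ω] [StandardBorelSpace Ω]
  [MeasurableSpace 𝕎] [MeasurableSpace 𝕋] [MeasurableSingletonClass 𝕋]
  {P : Measure Ω} [IsFiniteMeasure P] {T : Ω → 𝕋} {Y : Ω → ℝ} {W : Ω → 𝕎}
  {κ : Kernel (𝕋 × 𝕎) ℝ}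

theorem condIndep_of_forall_Fcdf_ae_eq_measurable [Countable 𝕋] (hY : Measurable Y)
    (hW : Measurable W)
    (hκ : ∀ y : ℝ, (fun ω => (κ (T ω, W ω) (Set.Iic y)).toReal) =ᵐ[P]
      P[indLE Y y|MeasurableSpace.comap (fun ω => (T ω, W ω)) inferInstance])
    {𝒵 : MeasurableSpace Ω} (h𝒵W : 𝒵 ≤ MeasurableSpace.comap W inferInstance)
    (hm' : MeasurableSpace.comap T inferInstance ⊔ 𝒵 ≤ mΩ)
    (hF : ∀ (t : 𝕋) (y : ℝ), ∃ g : Ω → ℝ, Measurable[𝒵] g ∧ Fcdf κ W t y =ᵐ[P] g) :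
    CondIndep (MeasurableSpace.comap T inferInstance ⊔ 𝒵)
      (MeasurableSpace.comap Y inferInstance) (MeasurableSpace.comap W inferInstance) hm' P := by
  choose g hg𝒵 hg using hF
  refine condIndep_of_aestronglyMeasurable_condExp_sup hY.comap_le hW.comap_le
    ((isPiSystem_Iic (α := ℝ)).comap Y) (comap_eq_generateFrom_preimage_Iic Y) ?_
  rintro _ ⟨_, ⟨y, rfl⟩, rfl⟩
  rw [comap_sup_sup_comap_eq_comap_prodMk h𝒵W]
  refine (measurable_comap_sup_apply fun t => hg𝒵 t y).stronglyMeasurable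
    |>.aestronglyMeasurable.congr ?_
  filter_upwards [ae_all_iff.mpr fun t => hg t y, hκ y] with ω hgω hκω
  exact (hgω (T ω)).symm.trans hκω

theorem forall_Fcdf_ae_eq_measurable_of_condIndep (hY : Measurable Y) (hW : Measurable W)
    (hκ : ∀ y : ℝ, (fun ω => (κ (T ω, W ω) (Set.Iic y)).toReal) =ᵐ[P]
      P[indLE Y y|MeasurableSpace.comap (fun ω => (T ω, W ω)) inferInstance])
    {𝒵 : MeasurableSpace Ω} (h𝒵W : 𝒵 ≤ MeasurableSpace.comap W inferInstance)
    (hm' : MeasurableSpace.comap T inferInstance ⊔ 𝒵 ≤ mΩ)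
    (hpos : ∀ t, ∀ᵐ ω ∂P, 0 < piZ P T (MeasurableSpace.comap W inferInstance) t ω)
    (hCI : CondIndep (MeasurableSpace.comap T inferInstance ⊔ 𝒵)
      (MeasurableSpace.comap Y inferInstance) (MeasurableSpace.comap W inferInstance) hm' P)
    (t : 𝕋) (y : ℝ) : ∃ g : Ω → ℝ, Measurable[𝒵] g ∧ Fcdf κ W t y =ᵐ[P] g := by
  have hsup := hCI.condExp_indicator_sup_ae_eq hY.comap_le hW.comap_le
    (s := Y ⁻¹' Set.Iic y) ⟨_, measurableSet_Iic, rfl⟩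
  rw [comap_sup_sup_comap_eq_comap_prodMk h𝒵W] at hsup
  obtain ⟨H, hH, hHeq⟩ := Measurable.exists_eq_apply_of_comap_sup
    (h := P⟦Y ⁻¹' Set.Iic y | MeasurableSpace.comap T inferInstance ⊔ 𝒵⟧)
    stronglyMeasurable_condExp.measurable
  refine ⟨H t, hH t, ?_⟩
  have hTt : MeasurableSet[mΩ] {ω | T ω = t} :=
    hm' _ (le_sup_left (b := 𝒵) _ ⟨{t}, measurableSet_singleton t, rfl⟩)
  refine ae_of_ae_mem_imp_of_condExp_pos hTt
    (measurableSet_eq_fun (measurable_Fcdf_comap κ W t y) ((hH t).mono h𝒵W le_rfl))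
    (hpos t) ?_
  filter_upwards [hκ y, hsup] with ω hκω hsupω (rfl : T ω = t)
  exact hκω.trans (hsupω.trans (hHeq ω))

end OutcomeDistribution

theorem outcome_distribution_sufficiency_characterization_general
    {Ω 𝕎 𝕋 : Type*} [mΩ : MeasurableSpace Ω] [StandardBorelSpace Ω]
    [MeasurableSpace 𝕎] [MeasurableSpace 𝕋] [MeasurableSingletonClass 𝕋]
    [Fintype 𝕋]
    (P : Measure Ω) [IsProbabilityMeasure P]
    (T : Ω → 𝕋) (Y : Ω → ℝ) (W : Ω → 𝕎)
    (hY : Measurable Y) (hW : Measurable W)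
    (κ : Kernel (𝕋 × 𝕎) ℝ)
    (hκ : ∀ y : ℝ, (fun ω => (κ (T ω, W ω) (Set.Iic y)).toReal) =ᵐ[P]
      P[indLE Y y|MeasurableSpace.comap (fun ω => (T ω, W ω)) inferInstance])
    (𝒵 : MeasurableSpace Ω) (h𝒵W : 𝒵 ≤ MeasurableSpace.comap W inferInstance)
    (hm' : MeasurableSpace.comap T inferInstance ⊔ 𝒵 ≤ mΩ) :
    ((∀ t, ∀ᵐ ω ∂P,
        0 < piZ P T (MeasurableSpace.comap W inferInstance) t ω ∧
          piZ P T (MeasurableSpace.comap W inferInstance) t ω < 1) →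
      (CondIndep (MeasurableSpace.comap T inferInstance ⊔ 𝒵)
          (MeasurableSpace.comap Y inferInstance)
          (MeasurableSpace.comap W inferInstance) hm' P ↔
        ∀ (t : 𝕋) (y : ℝ), ∃ g : Ω → ℝ, Measurable[𝒵] g ∧ Fcdf κ W t y =ᵐ[P] g)) ∧
    ((∀ (t : 𝕋) (y : ℝ), ∃ g : Ω → ℝ, Measurable[𝒵] g ∧ Fcdf κ W t y =ᵐ[P] g) →
      CondIndep (MeasurableSpace.comap T inferInstance ⊔ 𝒵)
        (MeasurableSpace.comap Y inferInstance)
        (MeasurableSpace.comap W inferInstance) hm' P) := by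
  have h_of_cdf := condIndep_of_forall_Fcdf_ae_eq_measurable (mΩ := mΩ) hY hW hκ h𝒵W hm'
  refine ⟨fun hpos => ⟨fun hCI => ?_, h_of_cdf⟩, h_of_cdf⟩
  exact forall_Fcdf_ae_eq_measurable_of_condIndep (mΩ := mΩ) hY hW hκ h𝒵W hm'
    (fun t => (hpos t).mono fun _ h => h.1) hCI

/-- **Characterization of outcome distribution sufficiency.** Under positivity,
`σ(Y) ⫫ σ(W) | σ(T) ⊔ 𝒵` holds if and only if for every `t` and `y` the conditional
distribution function `F(y | t, W)` is a.s. equal to a `𝒵`-measurable function; the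
implication from right to left holds without positivity. -/
theorem outcome_distribution_sufficiency_characterization
    {Ω 𝕎 𝕋 : Type*} [mΩ : MeasurableSpace Ω] [StandardBorelSpace Ω]
    [MeasurableSpace 𝕎] [MeasurableSpace 𝕋] [MeasurableSingletonClass 𝕋]
    [Fintype 𝕋] [Nonempty 𝕋]
    (P : Measure Ω) [IsProbabilityMeasure P]
    (T : Ω → 𝕋) (Y : Ω → ℝ) (W : Ω → 𝕎)
    (hT : Measurable T) (hY : Measurable Y) (hW : Measurable W)
    (κ : Kernel (𝕋 × 𝕎) ℝ) [IsMarkovKernel κ]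
    (hκ : ∀ y : ℝ, (fun ω => (κ (T ω, W ω) (Set.Iic y)).toReal) =ᵐ[P]
      P[indLE Y y|MeasurableSpace.comap (fun ω => (T ω, W ω)) inferInstance])
    (𝒵 : MeasurableSpace Ω) (h𝒵W : 𝒵 ≤ MeasurableSpace.comap W inferInstance)
    (hm' : MeasurableSpace.comap T inferInstance ⊔ 𝒵 ≤ mΩ) :
    ((∀ t, ∀ᵐ ω ∂P,
        0 < piZ P T (MeasurableSpace.comap W inferInstance) t ω ∧
          piZ P T (MeasurableSpace.comap W inferInstance) t ω < 1) →
      (CondIndep (MeasurableSpace.comap T inferInstance ⊔ 𝒵)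
          (MeasurableSpace.comap Y inferInstance)
          (MeasurableSpace.comap W inferInstance) hm' P ↔
        ∀ (t : 𝕋) (y : ℝ), ∃ g : Ω → ℝ, Measurable[𝒵] g ∧ Fcdf κ W t y =ᵐ[P] g)) ∧
    ((∀ (t : 𝕋) (y : ℝ), ∃ g : Ω → ℝ, Measurable[𝒵] g ∧ Fcdf κ W t y =ᵐ[P] g) →
      CondIndep (MeasurableSpace.comap T inferInstance ⊔ 𝒵)
        (MeasurableSpace.comap Y inferInstance)
        (MeasurableSpace.comap W inferInstance) hm' P) :=
  outcome_distribution_sufficiency_characterization_general (mΩ := mΩ) P T Y W hY hW κ hκ 𝒵 h𝒵W hm'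
end

section
/- Let Π := σ( π_t(σ(W)) : t ∈ 𝕋 ) be the σ-algebra generated by the propensity scores π_t(σ(W)) = E[1{T=t} | σ(W)], so that Π ⊆ σ(W). Assume positivity, let 𝒵 be a sub-σ-algebra with Π ⊆ 𝒵 ⊆ σ(W), and assume that for every t ∈ 𝕋 the variables b_t(Π), b_t(𝒵), b_t(σ(W)) are integrable and ψ_t(Π), ψ_t(𝒵) are square-integrable. Then: (a) χ_t(𝒵) = χ_t(σ(W)) for every t ∈ 𝕋 (𝒵 is a valid adjustment); (b) with R_t := (1{T=t}/π_t(𝒵) − 1)·(b_t(𝒵) − b_t(Π)), it holds that V_Δ(Π) − V_Δ(𝒵) = Var( Σ_{t∈𝕋} c_t·R_t ) ≥ 0. -/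
open MeasureTheory ProbabilityTheory

/-- The σ-algebra `Π` generated by the propensity scores `π_t(σ(W))`, `t ∈ 𝕋`. -/
noncomputable def propAlg {Ω 𝕎 𝕋 : Type*} {mΩ : MeasurableSpace Ω} [MeasurableSpace 𝕎]
    (P : Measure Ω) (T : Ω → 𝕋) (W : Ω → 𝕎) : MeasurableSpace Ω :=
  ⨆ t : 𝕋, MeasurableSpace.comap
    (piZ P T (MeasurableSpace.comap W inferInstance) t) inferInstance

/-!
Every propensity score `π_t(σ(W))` is `Π`-measurable, hence `𝒵`-measurable, so the tower
property gives `π_t(𝒵) = π_t(σ(W))` and `b_t(𝒵) = E[b_t(σ(W)) | 𝒵]`; taking expectations,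
`χ_t(𝒵) = χ_t(σ(W))`. With equal propensities and means, `ψ_t(Π) = ψ_t(𝒵) + R_t`, where
`R_t = (b_t(𝒵) - b_t(Π)) / π_t · (1{T=t} - π_t)` is a `𝒵`-measurable multiple of a variable
with zero `𝒵`-conditional mean. Splitting `ψ_s(𝒵) = (b_s(𝒵) - χ_s) + 1{T=s}/π_s · (Y - b_s(𝒵))`,
both parts are orthogonal to `R_t`: the first is `𝒵`-measurable, and in the second
`1{T=s} · 1{T=t} = 1{s=t} · 1{T=s}` leaves a `𝒵`-measurable multiple of `1{T=s}(Y - b_s(𝒵))`,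
whose `𝒵`-conditional mean also vanishes. So `ψ(𝒵)` and `R` are uncorrelated and the variance
of `Σ c_t ψ_t(Π)` splits as `V_Δ(𝒵) + Var(Σ c_t R_t)`.
-/

open MeasureTheory ProbabilityTheory Filter

section General

variable {α ι : Type*} {m m₀ : MeasurableSpace α} {μ : Measure α} [IsFiniteMeasure μ]

theorem integral_mul_eq_zero_of_condExp_eq_zero (hm : m ≤ m₀) {f g : α → ℝ}
    (hf : StronglyMeasurable[m] f) (hfg : Integrable (f * g) μ) (hg : Integrable g μ)
    (hg0 : μ[g|m] =ᵐ[μ] 0) : ∫ x, f x * g x ∂μ = 0 := by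
  refine (integral_condExp (f := f * g) hm).symm.trans (integral_eq_zero_of_ae ?_)
  filter_upwards [condExp_mul_of_stronglyMeasurable_left hf hfg hg, hg0] with x hfgx hgx
  simp [hfgx, hgx]

theorem variance_sum_add_of_covariance_eq_zero [Fintype ι] {X R : ι → α → ℝ} (c : ι → ℝ)
    (hX : ∀ i, MemLp (X i) 2 μ) (hR : ∀ i, MemLp (R i) 2 μ)
    (hXR : ∀ i j, cov[X i, R j; μ] = 0) :
    Var[fun x => ∑ i, c i * (X i x + R i x); μ] =
      Var[fun x => ∑ i, c i * X i x; μ] + Var[fun x => ∑ i, c i * R i x; μ] := by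
  have hcX : ∀ i, MemLp (fun x => c i * X i x) 2 μ := fun i => (hX i).const_mul (c i)
  have hcR : ∀ i, MemLp (fun x => c i * R i x) 2 μ := fun i => (hR i).const_mul (c i)
  have hcov : cov[fun x => ∑ i, c i * X i x, fun x => ∑ j, c j * R j x; μ] = 0 := by
    rw [covariance_fun_sum_fun_sum hcX hcR]
    simp [covariance_const_mul_left, covariance_const_mul_right, hXR]
  simp_rw [mul_add, Finset.sum_add_distrib]
  rw [variance_fun_add (memLp_finsetSum _ fun i _ => hcX i)
    (memLp_finsetSum _ fun i _ => hcR i), hcov, mul_zero, add_zero]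

end General

section Adjustment

variable {Ω 𝕋 : Type*} {𝒳 𝒵 𝒲 mΩ : MeasurableSpace Ω} {P : Measure Ω} {T : Ω → 𝕋}
  {Y : Ω → ℝ} {t s : 𝕋}

theorem mul_indT_eq_indicator (g : Ω → ℝ) :
    (fun ω => g ω * indT T t ω) = {ω | T ω = t}.indicator g := by
  ext ω
  by_cases h : T ω = t <;> simp [indT, h]

theorem indT_mul_indT [DecidableEq 𝕋] (ω : Ω) :
    indT T t ω * indT T s ω = (if t = s then 1 else 0) * indT T t ω := by
  by_cases ht : T ω = t <;> by_cases hs : T ω = s <;> simp_all [indT]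

theorem integrable_mul_indT (hT : MeasurableSet {ω | T ω = t}) {g : Ω → ℝ}
    (hg : Integrable g P) : Integrable (fun ω => g ω * indT T t ω) P := by
  rw [mul_indT_eq_indicator]
  exact hg.indicator hT

theorem stronglyMeasurable_piZ : StronglyMeasurable[𝒳] (piZ P T 𝒳 t) :=
  stronglyMeasurable_condExp

theorem stronglyMeasurable_bZ : StronglyMeasurable[𝒳] (bZ P T Y 𝒳 t) :=
  (stronglyMeasurable_condExp.measurable.div
    stronglyMeasurable_piZ.measurable).stronglyMeasurable

theorem stronglyMeasurable_piZ_propAlg {𝕎 : Type*} [MeasurableSpace 𝕎] (W : Ω → 𝕎) :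
    StronglyMeasurable[propAlg P T W] (piZ P T (MeasurableSpace.comap W inferInstance) t) :=
  (Measurable.of_comap_le (le_iSup_of_le t le_rfl)).stronglyMeasurable

theorem psiZ_ae_eq_psiZ_add (hπ : piZ P T 𝒳 t =ᵐ[P] piZ P T 𝒵 t)
    (hχ : chiZ P T Y 𝒳 t = chiZ P T Y 𝒵 t) :
    psiZ P T Y 𝒳 t =ᵐ[P] fun ω => psiZ P T Y 𝒵 t ω +
      (indT T t ω / piZ P T 𝒵 t ω - 1) * (bZ P T Y 𝒵 t ω - bZ P T Y 𝒳 t ω) := by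
  filter_upwards [hπ] with ω hω
  simp only [psiZ, hω, hχ]
  ring

theorem integrable_indT_mul_sub_bZ (hT : MeasurableSet {ω | T ω = t}) (hY : Integrable Y P)
    (hb : Integrable (bZ P T Y 𝒵 t) P) :
    Integrable (fun ω => indT T t ω * (Y ω - bZ P T Y 𝒵 t ω)) P := by
  simpa only [mul_comm, Pi.sub_apply] using integrable_mul_indT hT (hY.sub hb)

section Finite

variable [IsFiniteMeasure P]

theorem integrable_indT (hT : MeasurableSet {ω | T ω = t}) : Integrable (indT T t) P :=
  (integrable_const 1).indicator hT

theorem piZ_ae_eq_of_le (h𝒳 : 𝒳 ≤ 𝒲) (h𝒲 : 𝒲 ≤ mΩ)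
    (hπ : StronglyMeasurable[𝒳] (piZ P T 𝒲 t)) : piZ P T 𝒳 t =ᵐ[P] piZ P T 𝒲 t :=
  (condExp_condExp_of_le h𝒳 h𝒲).symm.trans
    (EventuallyEq.of_eq (condExp_of_stronglyMeasurable (h𝒳.trans h𝒲) hπ integrable_condExp))

theorem bZ_ae_eq_condExp_bZ (h𝒳 : 𝒳 ≤ 𝒲) (h𝒲 : 𝒲 ≤ mΩ)
    (hπ : StronglyMeasurable[𝒳] (piZ P T 𝒲 t)) (hb : Integrable (bZ P T Y 𝒲 t) P) :
    bZ P T Y 𝒳 t =ᵐ[P] P[bZ P T Y 𝒲 t|𝒳] := by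
  have hinv : StronglyMeasurable[𝒳] fun ω => (piZ P T 𝒲 t ω)⁻¹ :=
    hπ.measurable.inv.stronglyMeasurable
  have hb_eq : bZ P T Y 𝒲 t =
      (fun ω => (piZ P T 𝒲 t ω)⁻¹) * P[fun ω => Y ω * indT T t ω|𝒲] := by
    ext ω
    exact div_eq_inv_mul _ _
  rw [hb_eq] at hb ⊢
  filter_upwards [piZ_ae_eq_of_le h𝒳 h𝒲 hπ,
    condExp_mul_of_stronglyMeasurable_left hinv hb integrable_condExp,
    condExp_condExp_of_le (f := fun ω => Y ω * indT T t ω) h𝒳 h𝒲] with ω hπω hpull htower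
  rw [hpull, Pi.mul_apply, htower, bZ, hπω, div_eq_inv_mul]

theorem chiZ_eq_of_le (h𝒳 : 𝒳 ≤ 𝒲) (h𝒲 : 𝒲 ≤ mΩ)
    (hπ : StronglyMeasurable[𝒳] (piZ P T 𝒲 t)) (hb : Integrable (bZ P T Y 𝒲 t) P) :
    chiZ P T Y 𝒳 t = chiZ P T Y 𝒲 t :=
  (integral_congr_ae (bZ_ae_eq_condExp_bZ h𝒳 h𝒲 hπ hb)).trans (integral_condExp (h𝒳.trans h𝒲))

theorem integrable_bZ_of_le (h𝒳 : 𝒳 ≤ 𝒲) (h𝒲 : 𝒲 ≤ mΩ)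
    (hπ : StronglyMeasurable[𝒳] (piZ P T 𝒲 t)) (hb : Integrable (bZ P T Y 𝒲 t) P) :
    Integrable (bZ P T Y 𝒳 t) P :=
  integrable_condExp.congr (bZ_ae_eq_condExp_bZ h𝒳 h𝒲 hπ hb).symm

theorem psiZ_ae_eq_psiZ_add_of_le (h𝒳 : 𝒳 ≤ 𝒵) (h𝒵 : 𝒵 ≤ 𝒲) (h𝒲 : 𝒲 ≤ mΩ)
    (hπ : StronglyMeasurable[𝒳] (piZ P T 𝒲 t)) (hb : Integrable (bZ P T Y 𝒲 t) P) :
    psiZ P T Y 𝒳 t =ᵐ[P] fun ω => psiZ P T Y 𝒵 t ω +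
      (indT T t ω / piZ P T 𝒵 t ω - 1) * (bZ P T Y 𝒵 t ω - bZ P T Y 𝒳 t ω) :=
  psiZ_ae_eq_psiZ_add
    ((piZ_ae_eq_of_le (h𝒳.trans h𝒵) h𝒲 hπ).trans (piZ_ae_eq_of_le h𝒵 h𝒲 (hπ.mono h𝒳)).symm)
    ((chiZ_eq_of_le (h𝒳.trans h𝒵) h𝒲 hπ hb).trans (chiZ_eq_of_le h𝒵 h𝒲 (hπ.mono h𝒳) hb).symm)

theorem condExp_indT_mul_sub_bZ (hT : MeasurableSet {ω | T ω = t}) (hY : Integrable Y P)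
    (hb : Integrable (bZ P T Y 𝒵 t) P) (hπ : ∀ᵐ ω ∂P, piZ P T 𝒵 t ω ≠ 0) :
    P[fun ω => indT T t ω * (Y ω - bZ P T Y 𝒵 t ω)|𝒵] =ᵐ[P] 0 := by
  have hbT : Integrable (bZ P T Y 𝒵 t * indT T t) P := integrable_mul_indT hT hb
  have hsplit : (fun ω => indT T t ω * (Y ω - bZ P T Y 𝒵 t ω)) =
      (fun ω => Y ω * indT T t ω) - bZ P T Y 𝒵 t * indT T t := by
    ext ω
    simp only [Pi.sub_apply, Pi.mul_apply]
    ring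
  rw [hsplit]
  filter_upwards [condExp_sub (integrable_mul_indT hT hY) hbT 𝒵,
    condExp_mul_of_stronglyMeasurable_left stronglyMeasurable_bZ hbT (integrable_indT hT), hπ]
    with ω hsub hpull hπω
  rw [hsub, Pi.sub_apply, hpull, Pi.mul_apply, Pi.zero_apply, bZ]
  exact sub_eq_zero.mpr (div_mul_cancel₀ _ hπω).symm

theorem condExp_psiZ (h𝒵 : 𝒵 ≤ mΩ) (hT : MeasurableSet {ω | T ω = t}) (hY : Integrable Y P)
    (hb : Integrable (bZ P T Y 𝒵 t) P) (hπ : ∀ᵐ ω ∂P, piZ P T 𝒵 t ω ≠ 0)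
    (hψ : Integrable (psiZ P T Y 𝒵 t) P) :
    P[psiZ P T Y 𝒵 t|𝒵] =ᵐ[P] fun ω => bZ P T Y 𝒵 t ω - chiZ P T Y 𝒵 t := by
  set a : Ω → ℝ := fun ω => bZ P T Y 𝒵 t ω - chiZ P T Y 𝒵 t
  set e : Ω → ℝ := fun ω => indT T t ω * (Y ω - bZ P T Y 𝒵 t ω)
  have ha : Integrable a P := hb.sub (integrable_const _)
  have he : Integrable e P := integrable_indT_mul_sub_bZ hT hY hb
  have hsplit : psiZ P T Y 𝒵 t = a + (piZ P T 𝒵 t)⁻¹ * e := by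
    ext ω
    simp only [psiZ, a, e, Pi.add_apply, Pi.mul_apply, Pi.inv_apply]
    ring
  have hq : Integrable ((piZ P T 𝒵 t)⁻¹ * e) P := by
    simpa only [hsplit, add_sub_cancel_left] using hψ.sub ha
  rw [hsplit]
  filter_upwards [condExp_add ha hq 𝒵, condExp_mul_of_stronglyMeasurable_left
    (f := (piZ P T 𝒵 t)⁻¹) stronglyMeasurable_piZ.measurable.inv.stronglyMeasurable hq he,
    condExp_indT_mul_sub_bZ hT hY hb hπ] with ω hadd hpull he0
  rw [hadd, Pi.add_apply, hpull, Pi.mul_apply, he0, condExp_of_stronglyMeasurable (f := a) h𝒵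
    (stronglyMeasurable_bZ.measurable.sub_const _).stronglyMeasurable ha]
  simp

theorem integral_indT_div_piZ_sub_one_mul_eq_zero (h𝒵 : 𝒵 ≤ mΩ)
    (hT : MeasurableSet {ω | T ω = s}) (hπ : ∀ᵐ ω ∂P, piZ P T 𝒵 s ω ≠ 0) {H : Ω → ℝ}
    (hH : StronglyMeasurable[𝒵] H)
    (hR : Integrable (fun ω => (indT T s ω / piZ P T 𝒵 s ω - 1) * H ω) P) :
    ∫ ω, (indT T s ω / piZ P T 𝒵 s ω - 1) * H ω ∂P = 0 := by
  set F : Ω → ℝ := fun ω => H ω / piZ P T 𝒵 s ω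
  have hF : StronglyMeasurable[𝒵] F :=
    (hH.measurable.div stronglyMeasurable_piZ.measurable).stronglyMeasurable
  have hR_eq : (fun ω => (indT T s ω / piZ P T 𝒵 s ω - 1) * H ω) =ᵐ[P]
      F * (indT T s - piZ P T 𝒵 s) := by
    filter_upwards [hπ] with ω hπω
    simp only [F, Pi.mul_apply, Pi.sub_apply]
    field_simp
  have hcentered : P[indT T s - piZ P T 𝒵 s|𝒵] =ᵐ[P] 0 := by
    filter_upwards [condExp_sub (g := piZ P T 𝒵 s) (integrable_indT hT) integrable_condExp 𝒵]
      with ω h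
    rw [h, Pi.sub_apply, condExp_of_stronglyMeasurable h𝒵 stronglyMeasurable_piZ
      integrable_condExp]
    exact sub_self _
  rw [integral_congr_ae hR_eq]
  exact integral_mul_eq_zero_of_condExp_eq_zero h𝒵 hF (hR.congr hR_eq)
    ((integrable_indT hT).sub integrable_condExp) hcentered

theorem integral_ipw_mul_eq_zero (h𝒵 : 𝒵 ≤ mΩ) (hT : MeasurableSet {ω | T ω = t})
    (hY : Integrable Y P) (hb : Integrable (bZ P T Y 𝒵 t) P)
    (hπ : ∀ᵐ ω ∂P, piZ P T 𝒵 t ω ≠ 0) {H : Ω → ℝ} (hH : StronglyMeasurable[𝒵] H)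
    (hqR : Integrable (fun ω => indT T t ω / piZ P T 𝒵 t ω * (Y ω - bZ P T Y 𝒵 t ω) *
      ((indT T s ω / piZ P T 𝒵 s ω - 1) * H ω)) P) :
    ∫ ω, indT T t ω / piZ P T 𝒵 t ω * (Y ω - bZ P T Y 𝒵 t ω) *
      ((indT T s ω / piZ P T 𝒵 s ω - 1) * H ω) ∂P = 0 := by
  classical
  set F : Ω → ℝ := fun ω =>
    H ω / piZ P T 𝒵 t ω * ((if t = s then 1 else 0) / piZ P T 𝒵 s ω - 1)
  have hF : StronglyMeasurable[𝒵] F :=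
    ((hH.measurable.div stronglyMeasurable_piZ.measurable).mul
      ((measurable_const.div stronglyMeasurable_piZ.measurable).sub
        measurable_const)).stronglyMeasurable
  -- `1{T=t} · 1{T=s} = 1{t=s} · 1{T=t}` leaves a `𝒵`-measurable factor `F`.
  have hqR_eq : (fun ω => indT T t ω / piZ P T 𝒵 t ω * (Y ω - bZ P T Y 𝒵 t ω) *
      ((indT T s ω / piZ P T 𝒵 s ω - 1) * H ω)) =
      F * fun ω => indT T t ω * (Y ω - bZ P T Y 𝒵 t ω) := by
    ext ω
    simp only [F, Pi.mul_apply]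
    linear_combination (Y ω - bZ P T Y 𝒵 t ω) * H ω / piZ P T 𝒵 t ω / piZ P T 𝒵 s ω *
      indT_mul_indT (T := T) (t := t) (s := s) ω
  rw [hqR_eq] at hqR ⊢
  exact integral_mul_eq_zero_of_condExp_eq_zero h𝒵 hF hqR
    (integrable_indT_mul_sub_bZ hT hY hb)
    (condExp_indT_mul_sub_bZ hT hY hb hπ)

theorem integral_psiZ_mul_eq_zero (h𝒵 : 𝒵 ≤ mΩ) (hTt : MeasurableSet {ω | T ω = t})
    (hTs : MeasurableSet {ω | T ω = s}) (hY : Integrable Y P) (hb : Integrable (bZ P T Y 𝒵 t) P)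
    (hπt : ∀ᵐ ω ∂P, piZ P T 𝒵 t ω ≠ 0) (hπs : ∀ᵐ ω ∂P, piZ P T 𝒵 s ω ≠ 0)
    (hψ : MemLp (psiZ P T Y 𝒵 t) 2 P) {H : Ω → ℝ} (hH : StronglyMeasurable[𝒵] H)
    (hR : MemLp (fun ω => (indT T s ω / piZ P T 𝒵 s ω - 1) * H ω) 2 P) :
    ∫ ω, psiZ P T Y 𝒵 t ω * ((indT T s ω / piZ P T 𝒵 s ω - 1) * H ω) ∂P = 0 := by
  set R : Ω → ℝ := fun ω => (indT T s ω / piZ P T 𝒵 s ω - 1) * H ω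
  set a : Ω → ℝ := fun ω => bZ P T Y 𝒵 t ω - chiZ P T Y 𝒵 t
  set q : Ω → ℝ := fun ω => indT T t ω / piZ P T 𝒵 t ω * (Y ω - bZ P T Y 𝒵 t ω)
  have hψ_eq : psiZ P T Y 𝒵 t = a + q := by
    ext ω
    simp only [psiZ, a, q, Pi.add_apply]
    ring
  have ha : MemLp a 2 P := (hψ.condExp (m := 𝒵) one_le_two).ae_eq
    (condExp_psiZ h𝒵 hTt hY hb hπt (hψ.integrable one_le_two))
  have hq : MemLp q 2 P := by simpa only [hψ_eq, add_sub_cancel_left] using hψ.sub ha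
  have haR : ∫ ω, a ω * R ω ∂P = 0 := by
    have hswap : (fun ω => a ω * R ω) =
        fun ω => (indT T s ω / piZ P T 𝒵 s ω - 1) * (a ω * H ω) := by
      ext ω
      ring
    rw [hswap]
    exact integral_indT_div_piZ_sub_one_mul_eq_zero h𝒵 hTs hπs
      ((stronglyMeasurable_bZ.measurable.sub_const _).stronglyMeasurable.mul hH)
      (hswap ▸ ha.integrable_mul hR)
  calc ∫ ω, psiZ P T Y 𝒵 t ω * R ω ∂P = ∫ ω, a ω * R ω ∂P + ∫ ω, q ω * R ω ∂P := by
        simp only [hψ_eq, Pi.add_apply, add_mul]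
        exact integral_add (ha.integrable_mul hR) (hq.integrable_mul hR)
    _ = 0 := by
        rw [haR, integral_ipw_mul_eq_zero h𝒵 hTt hY hb hπt hH (hq.integrable_mul hR), add_zero]

end Finite

theorem covariance_psiZ_eq_zero [IsProbabilityMeasure P] (h𝒵 : 𝒵 ≤ mΩ)
    (hTt : MeasurableSet {ω | T ω = t}) (hTs : MeasurableSet {ω | T ω = s})
    (hY : Integrable Y P) (hb : Integrable (bZ P T Y 𝒵 t) P)
    (hπt : ∀ᵐ ω ∂P, piZ P T 𝒵 t ω ≠ 0) (hπs : ∀ᵐ ω ∂P, piZ P T 𝒵 s ω ≠ 0)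
    (hψ : MemLp (psiZ P T Y 𝒵 t) 2 P) {H : Ω → ℝ} (hH : StronglyMeasurable[𝒵] H)
    (hR : MemLp (fun ω => (indT T s ω / piZ P T 𝒵 s ω - 1) * H ω) 2 P) :
    cov[psiZ P T Y 𝒵 t, fun ω => (indT T s ω / piZ P T 𝒵 s ω - 1) * H ω; P] = 0 := by
  rw [covariance_eq_sub hψ hR]
  simp only [Pi.mul_apply, integral_psiZ_mul_eq_zero h𝒵 hTt hTs hY hb hπt hπs hψ hH hR,
    integral_indT_div_piZ_sub_one_mul_eq_zero h𝒵 hTs hπs hH (hR.integrable one_le_two),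
    mul_zero, sub_zero]

end Adjustment

theorem propensity_adjustment_general
    {Ω 𝕎 𝕋 : Type*} [mΩ : MeasurableSpace Ω]
    [MeasurableSpace 𝕎] [MeasurableSpace 𝕋] [MeasurableSingletonClass 𝕋]
    [Fintype 𝕋]
    (P : Measure Ω) [IsProbabilityMeasure P]
    (T : Ω → 𝕋) (Y : Ω → ℝ) (W : Ω → 𝕎)
    (hT : Measurable T) (hW : Measurable W)
    (hY2 : MemLp Y 2 P)
    (c : 𝕋 → ℝ)
    (𝒵 : MeasurableSpace Ω)
    (hPialg𝒵 : propAlg P T W ≤ 𝒵)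
    (h𝒵W : 𝒵 ≤ MeasurableSpace.comap W inferInstance)
    (hpos : ∀ t, ∀ᵐ ω ∂P,
      0 < piZ P T (MeasurableSpace.comap W inferInstance) t ω ∧
        piZ P T (MeasurableSpace.comap W inferInstance) t ω < 1)
    (hbW : ∀ t, Integrable (bZ P T Y (MeasurableSpace.comap W inferInstance) t) P)
    (hψPialg : ∀ t, MemLp (psiZ P T Y (propAlg P T W) t) 2 P)
    (hψ𝒵 : ∀ t, MemLp (psiZ P T Y 𝒵 t) 2 P) :
    (∀ t, chiZ P T Y 𝒵 t = chiZ P T Y (MeasurableSpace.comap W inferInstance) t) ∧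
    (VDelta P T Y c (propAlg P T W) - VDelta P T Y c 𝒵 =
      variance (fun ω => ∑ t, c t *
        ((indT T t ω / piZ P T 𝒵 t ω - 1) *
          (bZ P T Y 𝒵 t ω - bZ P T Y (propAlg P T W) t ω))) P) ∧
    (0 ≤ VDelta P T Y c (propAlg P T W) - VDelta P T Y c 𝒵) := by
  have hTt : ∀ t, MeasurableSet[mΩ] {ω | T ω = t} := fun t => hT (measurableSet_singleton t)
  set 𝒲 : MeasurableSpace Ω := MeasurableSpace.comap W inferInstance
  set Pialg := propAlg P T W
  set R : 𝕋 → Ω → ℝ := fun t ω =>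
    (indT T t ω / piZ P T 𝒵 t ω - 1) * (bZ P T Y 𝒵 t ω - bZ P T Y Pialg t ω)
  have h𝒲 : 𝒲 ≤ mΩ := hW.comap_le
  have hπ𝒵 : ∀ t, StronglyMeasurable[𝒵] (piZ P T 𝒲 t) := fun t =>
    (stronglyMeasurable_piZ_propAlg W).mono hPialg𝒵
  have hχ : ∀ t, chiZ P T Y 𝒵 t = chiZ P T Y 𝒲 t := fun t =>
    chiZ_eq_of_le h𝒵W h𝒲 (hπ𝒵 t) (hbW t)
  have hπ_ne : ∀ t, ∀ᵐ ω ∂P, piZ P T 𝒵 t ω ≠ 0 := fun t => by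
    filter_upwards [piZ_ae_eq_of_le h𝒵W h𝒲 (hπ𝒵 t), hpos t] with ω h hω
    exact h ▸ hω.1.ne'
  have hψ : ∀ t, psiZ P T Y Pialg t =ᵐ[P] fun ω => psiZ P T Y 𝒵 t ω + R t ω := fun t =>
    psiZ_ae_eq_psiZ_add_of_le hPialg𝒵 h𝒵W h𝒲 (stronglyMeasurable_piZ_propAlg W) (hbW t)
  have hR : ∀ t, MemLp (R t) 2 P := fun t =>
    ((hψPialg t).sub (hψ𝒵 t)).ae_eq ((hψ t).mono fun ω hω => by simp [hω])
  have hcov : ∀ t s, cov[psiZ P T Y 𝒵 t, R s; P] = 0 := fun t s =>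
    covariance_psiZ_eq_zero (h𝒵W.trans h𝒲) (hTt t) (hTt s) (hY2.integrable one_le_two)
      (integrable_bZ_of_le h𝒵W h𝒲 (hπ𝒵 t) (hbW t)) (hπ_ne t) (hπ_ne s) (hψ𝒵 t)
      (stronglyMeasurable_bZ.sub (stronglyMeasurable_bZ.mono hPialg𝒵)) (hR s)
  have hV : VDelta P T Y c Pialg - VDelta P T Y c 𝒵 = variance (fun ω => ∑ t, c t * R t ω) P := by
    rw [VDelta, variance_congr (Y := fun ω => ∑ t, c t * (psiZ P T Y 𝒵 t ω + R t ω))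
      ((ae_all_iff.mpr hψ).mono fun ω hω => by simp only [hω]),
      variance_sum_add_of_covariance_eq_zero c hψ𝒵 hR hcov, VDelta, add_sub_cancel_left]
  exact ⟨hχ, hV, hV ▸ variance_nonneg _ _⟩

/-- **Validity and inefficiency of propensity-score adjustment.** If `Π ⊆ 𝒵 ⊆ σ(W)`, where
`Π` is the σ-algebra generated by the propensity scores, then `𝒵` is valid,
`χ_t(𝒵) = χ_t(σ(W))`, and `V_Δ(Π) − V_Δ(𝒵) = Var(Σ_t c_t·R_t(Π,𝒵)) ≥ 0`. -/
theorem propensity_adjustment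
    {Ω 𝕎 𝕋 : Type*} [mΩ : MeasurableSpace Ω] [StandardBorelSpace Ω]
    [MeasurableSpace 𝕎] [MeasurableSpace 𝕋] [MeasurableSingletonClass 𝕋]
    [Fintype 𝕋] [Nonempty 𝕋]
    (P : Measure Ω) [IsProbabilityMeasure P]
    (T : Ω → 𝕋) (Y : Ω → ℝ) (W : Ω → 𝕎)
    (hT : Measurable T) (hY : Measurable Y) (hW : Measurable W)
    (hY2 : MemLp Y 2 P)
    (c : 𝕋 → ℝ)
    (𝒵 : MeasurableSpace Ω)
    (hPialg𝒵 : propAlg P T W ≤ 𝒵)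
    (h𝒵W : 𝒵 ≤ MeasurableSpace.comap W inferInstance)
    (hpos : ∀ t, ∀ᵐ ω ∂P,
      0 < piZ P T (MeasurableSpace.comap W inferInstance) t ω ∧
        piZ P T (MeasurableSpace.comap W inferInstance) t ω < 1)
    (hbPialg : ∀ t, Integrable (bZ P T Y (propAlg P T W) t) P)
    (hb𝒵 : ∀ t, Integrable (bZ P T Y 𝒵 t) P)
    (hbW : ∀ t, Integrable (bZ P T Y (MeasurableSpace.comap W inferInstance) t) P)
    (hψPialg : ∀ t, MemLp (psiZ P T Y (propAlg P T W) t) 2 P)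
    (hψ𝒵 : ∀ t, MemLp (psiZ P T Y 𝒵 t) 2 P) :
    (∀ t, chiZ P T Y 𝒵 t = chiZ P T Y (MeasurableSpace.comap W inferInstance) t) ∧
    (VDelta P T Y c (propAlg P T W) - VDelta P T Y c 𝒵 =
      variance (fun ω => ∑ t, c t *
        ((indT T t ω / piZ P T 𝒵 t ω - 1) *
          (bZ P T Y 𝒵 t ω - bZ P T Y (propAlg P T W) t ω))) P) ∧
    (0 ≤ VDelta P T Y c (propAlg P T W) - VDelta P T Y c 𝒵) :=
  propensity_adjustment_general (mΩ := mΩ) P T Y W hT hW hY2 c 𝒵 hPialg𝒵 h𝒵W hpos hbW hψPialg hψ𝒵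
end

section
/- Assume: (i) C is conditionally independent of the pair (T*, X) given σ(Z); (ii) there are measurable functions I, J : E → ℝ such that E[1{T* ≥ t} | σ(X, Z)] = exp(−X·I(Z) − J(Z)) almost surely (in the multiplicative hazards model 𝐡_s(X, Z) = (X·θ_s + 1)·φ_s(Z) one has I(Z) = ∫₀ᵗ θ_s·φ_s(Z) ds and J(Z) = ∫₀ᵗ φ_s(Z) ds); (iii) π₀ : E → ℝ is measurable with π₀(Z) = E[X | σ(Z)] almost surely; (iv) E[1{C ≥ t} | σ(Z)] > 0 almost surely. Then almost surely E[1{T ≥ t} | σ(Z)] > 0 and E[X·1{T ≥ t} | σ(Z)] / E[1{T ≥ t} | σ(Z)] = π₀(Z) / ( π₀(Z) + (1 − π₀(Z))·exp(I(Z)) ). -/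
open MeasureTheory ProbabilityTheory

noncomputable section

/-- The real-valued indicator of the event `{t ≤ V}` (at-risk indicator at time `t`). -/
def indGE {Ω : Type*} (V : Ω → ℝ) (t : ℝ) : Ω → ℝ :=
  ({ω | t ≤ V ω}).indicator fun _ => 1

end

/-!
Given `σ(Z)`, censoring is independent of `(T*, X)`, so `E[1{T ≥ t} | Z]` and
`E[X·1{T ≥ t} | Z]` share the factor `E[1{C ≥ t} | Z]`, which cancels in their ratio.
Because `X` is binary, the conditional survival function `exp (−X·I(Z) − J(Z))` is the mixture
`X·e^{−I−J} + (1 − X)·e^{−J}` with `σ(Z)`-measurable weights; conditioning it further down from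
`σ(X, Z)` to `σ(Z)` replaces `X` by `π₀(Z)`, and `e^{−J}` cancels from the ratio.
-/

open Set

section Binary

variable {Ω : Type*} {m G mΩ : MeasurableSpace Ω} {μ : Measure Ω} {X a b f : Ω → ℝ}

lemma one_sub_binary (hX : ∀ ω, X ω = 0 ∨ X ω = 1) (ω : Ω) : 1 - X ω = 0 ∨ 1 - X ω = 1 := by
  rcases hX ω with h | h <;> simp [h]

lemma mul_binary_mixture (hX : ∀ ω, X ω = 0 ∨ X ω = 1) (ω : Ω) :
    X ω * (X ω * a ω + (1 - X ω) * b ω) = X ω * a ω := by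
  rcases hX ω with h | h <;> simp [h]

lemma one_sub_mul_binary_mixture (hX : ∀ ω, X ω = 0 ∨ X ω = 1) (ω : Ω) :
    (1 - X ω) * (X ω * a ω + (1 - X ω) * b ω) = (1 - X ω) * b ω := by
  rcases hX ω with h | h <;> simp [h]

lemma binary_mul_indicator_one (hX : ∀ ω, X ω = 0 ∨ X ω = 1) (s : Set Ω) :
    (fun ω => X ω * s.indicator (fun _ => (1 : ℝ)) ω) = (s ∩ X ⁻¹' {1}).indicator fun _ => 1 := by
  ext ω
  by_cases hs : ω ∈ s <;> rcases hX ω with h | h <;> simp [hs, h]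

lemma MeasureTheory.Integrable.binary_mul {g : Ω → ℝ} (hg : Integrable g μ)
    (hXm : AEStronglyMeasurable X μ) (hX : ∀ ω, X ω = 0 ∨ X ω = 1) :
    Integrable (fun ω => X ω * g ω) μ :=
  hg.bdd_mul hXm (c := 1) (ae_of_all _ fun ω => by rcases hX ω with h | h <;> simp [h])

lemma MeasureTheory.Integrable.binary_mul_mixture
    (hmix : Integrable (fun ω => X ω * a ω + (1 - X ω) * b ω) μ) (hXm : Measurable X)
    (hX : ∀ ω, X ω = 0 ∨ X ω = 1) : Integrable (fun ω => X ω * a ω) μ :=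
  (hmix.binary_mul hXm.aestronglyMeasurable hX).congr (ae_of_all _ (mul_binary_mixture hX))

lemma integrable_of_binary [IsFiniteMeasure μ] (hXm : AEStronglyMeasurable X μ)
    (hX : ∀ ω, X ω = 0 ∨ X ω = 1) : Integrable X μ := by
  simpa using (integrable_const (1 : ℝ)).binary_mul hXm hX

lemma integrable_indGE [IsFiniteMeasure μ] {V : Ω → ℝ} (hV : Measurable V) (t : ℝ) :
    Integrable (indGE V t) μ :=
  (integrable_const 1).indicator (hV measurableSet_Ici)

lemma condExp_binary_mem_Icc [IsFiniteMeasure μ] (hm : m ≤ mΩ) (hXm : Measurable X)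
    (hX : ∀ ω, X ω = 0 ∨ X ω = 1) : ∀ᵐ ω ∂μ, 0 ≤ μ[X|m] ω ∧ μ[X|m] ω ≤ 1 := by
  have hnonneg : 0 ≤ᵐ[μ] μ[X|m] :=
    condExp_nonneg (ae_of_all _ fun ω => by rcases hX ω with h | h <;> simp [h])
  have hle : μ[X|m] ≤ᵐ[μ] μ[fun _ => (1 : ℝ)|m] :=
    condExp_mono (integrable_of_binary hXm.aestronglyMeasurable hX) (integrable_const 1)
      (ae_of_all _ fun ω => by rcases hX ω with h | h <;> simp [h])
  filter_upwards [hnonneg, hle] with ω h0 h1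
  exact ⟨h0, by simpa [condExp_const hm] using h1⟩

theorem condExp_eq_of_condExp_eq_binary_mixture [IsFiniteMeasure μ] (hmG : m ≤ G)
    (hG : G ≤ mΩ) (hXG : Measurable[G] X) (hX : ∀ ω, X ω = 0 ∨ X ω = 1)
    (hfG : μ[f|G] =ᵐ[μ] fun ω => X ω * a ω + (1 - X ω) * b ω)
    (ha : StronglyMeasurable[m] a) (hb : StronglyMeasurable[m] b) :
    μ[f|m] =ᵐ[μ] fun ω => μ[X|m] ω * a ω + (1 - μ[X|m] ω) * b ω := by
  have hXm : Measurable X := hXG.mono hG le_rfl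
  have hXi : Integrable X μ := integrable_of_binary hXm.aestronglyMeasurable hX
  have hmix : Integrable (fun ω => X ω * a ω + (1 - X ω) * b ω) μ :=
    integrable_condExp.congr hfG
  have hXa : Integrable (fun ω => X ω * a ω) μ := hmix.binary_mul_mixture hXm hX
  have hXb : Integrable (fun ω => (1 - X ω) * b ω) μ := by
    refine (hmix.binary_mul (hXm.const_sub 1).aestronglyMeasurable (one_sub_binary hX)).congr ?_
    exact ae_of_all _ (one_sub_mul_binary_mixture hX)
  calc μ[f|m] =ᵐ[μ] μ[μ[f|G]|m] := (condExp_condExp_of_le hmG hG).symm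
    _ =ᵐ[μ] μ[fun ω => X ω * a ω + (1 - X ω) * b ω|m] := condExp_congr_ae hfG
    _ =ᵐ[μ] μ[fun ω => X ω * a ω|m] + μ[fun ω => (1 - X ω) * b ω|m] := condExp_add hXa hXb m
    _ =ᵐ[μ] μ[X|m] * a + μ[(fun _ => 1) - X|m] * b :=
      (condExp_mul_of_stronglyMeasurable_right ha hXa hXi).add
        (condExp_mul_of_stronglyMeasurable_right hb hXb ((integrable_const 1).sub hXi))
    _ =ᵐ[μ] fun ω => μ[X|m] ω * a ω + (1 - μ[X|m] ω) * b ω := by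
      filter_upwards [condExp_sub (integrable_const (1 : ℝ)) hXi m] with ω hω
      simp only [Pi.add_apply, Pi.mul_apply, hω, Pi.sub_apply, condExp_const (hmG.trans hG)]

theorem condExp_mul_eq_of_condExp_eq_binary_mixture [IsFiniteMeasure μ] (hmG : m ≤ G)
    (hG : G ≤ mΩ) (hXG : Measurable[G] X) (hX : ∀ ω, X ω = 0 ∨ X ω = 1)
    (hfG : μ[f|G] =ᵐ[μ] fun ω => X ω * a ω + (1 - X ω) * b ω)
    (ha : StronglyMeasurable[m] a) (hf : Integrable f μ) :
    μ[fun ω => X ω * f ω|m] =ᵐ[μ] fun ω => μ[X|m] ω * a ω := by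
  have hXm : Measurable X := hXG.mono hG le_rfl
  have hXa : Integrable (fun ω => X ω * a ω) μ :=
    (integrable_condExp.congr hfG).binary_mul_mixture hXm hX
  calc μ[fun ω => X ω * f ω|m] =ᵐ[μ] μ[μ[fun ω => X ω * f ω|G]|m] :=
        (condExp_condExp_of_le hmG hG).symm
    _ =ᵐ[μ] μ[fun ω => X ω * (X ω * a ω + (1 - X ω) * b ω)|m] := by
      refine condExp_congr_ae ((condExp_mul_of_stronglyMeasurable_left hXG.stronglyMeasurable
        (hf.binary_mul hXm.aestronglyMeasurable hX) hf).trans ?_)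
      filter_upwards [hfG] with ω hω
      simp only [Pi.mul_apply, hω]
    _ = μ[fun ω => X ω * a ω|m] := by simp only [mul_binary_mixture hX]
    _ =ᵐ[μ] μ[X|m] * a := condExp_mul_of_stronglyMeasurable_right ha hXa
      (integrable_of_binary hXm.aestronglyMeasurable hX)

end Binary

section Censoring

variable {Ω : Type*} {m mΩ : MeasurableSpace Ω} [StandardBorelSpace Ω] {hm : m ≤ mΩ}
  {μ : Measure Ω} [IsFiniteMeasure μ] {T C X : Ω → ℝ}

theorem condExp_min_preimage_Ici_inter_eq_mul (hT : Measurable T) (hC : Measurable C)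
    (hX : Measurable X) (hci : CondIndepFun m hm C (fun ω => (T ω, X ω)) μ) (t : ℝ)
    {u : Set ℝ} (hu : MeasurableSet u) :
    μ⟦(fun ω => min (T ω) (C ω)) ⁻¹' Ici t ∩ X ⁻¹' u | m⟧ =ᵐ[μ]
      fun ω => (μ⟦C ⁻¹' Ici t | m⟧) ω * (μ⟦T ⁻¹' Ici t ∩ X ⁻¹' u | m⟧) ω := by
  have hset : (fun ω => min (T ω) (C ω)) ⁻¹' Ici t ∩ X ⁻¹' u
      = C ⁻¹' Ici t ∩ (fun ω => (T ω, X ω)) ⁻¹' (Ici t ×ˢ u) := by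
    ext ω
    simp only [mem_inter_iff, le_min_iff, mem_preimage, mem_Ici, mem_prod]
    tauto
  rw [hset]
  exact (condIndepFun_iff_condExp_inter_preimage_eq_mul hC (hT.prodMk hX)).1 hci _ _
    measurableSet_Ici (measurableSet_Ici.prod hu)

theorem condExp_indGE_min_eq_mul (hT : Measurable T) (hC : Measurable C) (hX : Measurable X)
    (hci : CondIndepFun m hm C (fun ω => (T ω, X ω)) μ) (t : ℝ) :
    μ[indGE (fun ω => min (T ω) (C ω)) t|m] =ᵐ[μ]
      fun ω => μ[indGE C t|m] ω * μ[indGE T t|m] ω := by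
  have h := condExp_min_preimage_Ici_inter_eq_mul hT hC hX hci t MeasurableSet.univ
  simp only [preimage_univ, inter_univ] at h
  exact h

theorem condExp_binary_mul_indGE_min_eq_mul (hT : Measurable T) (hC : Measurable C)
    (hX : Measurable X) (hXbin : ∀ ω, X ω = 0 ∨ X ω = 1)
    (hci : CondIndepFun m hm C (fun ω => (T ω, X ω)) μ) (t : ℝ) :
    μ[fun ω => X ω * indGE (fun ω => min (T ω) (C ω)) t ω|m] =ᵐ[μ]
      fun ω => μ[indGE C t|m] ω * μ[fun ω => X ω * indGE T t ω|m] ω := by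
  simp only [indGE, binary_mul_indicator_one hXbin]
  exact condExp_min_preimage_Ici_inter_eq_mul hT hC hX hci t (measurableSet_singleton 1)

end Censoring

lemma exp_mixture_pos_and_ratio_eq {A p i j : ℝ} (hA : 0 < A) (hp0 : 0 ≤ p) (hp1 : p ≤ 1) :
    0 < A * (p * Real.exp (-i - j) + (1 - p) * Real.exp (-j)) ∧
      A * (p * Real.exp (-i - j)) / (A * (p * Real.exp (-i - j) + (1 - p) * Real.exp (-j)))
        = p / (p + (1 - p) * Real.exp i) := by
  have hpos : ∀ e₁ e₂ : ℝ, 0 < e₁ → 0 < e₂ → 0 < p * e₁ + (1 - p) * e₂ := by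
    intro e₁ e₂ h₁ h₂
    rcases hp0.eq_or_lt with rfl | hp
    · simpa using h₂
    · exact add_pos_of_pos_of_nonneg (mul_pos hp h₁) (mul_nonneg (sub_nonneg.2 hp1) h₂.le)
  have hden := mul_pos hA (hpos _ _ (Real.exp_pos (-i - j)) (Real.exp_pos (-j)))
  have hden' : 0 < p + (1 - p) * Real.exp i := by
    simpa using hpos 1 _ one_pos (Real.exp_pos i)
  have hsplit : Real.exp (-j) = Real.exp (-i - j) * Real.exp i := by
    rw [← Real.exp_add]; ring_nf
  refine ⟨hden, ?_⟩
  rw [div_eq_div_iff hden.ne' hden'.ne', hsplit]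
  ring
theorem binary_predictable_projection_general
    {Ω E : Type*} [mΩ : MeasurableSpace Ω] [StandardBorelSpace Ω]
    [MeasurableSpace E]
    (P : Measure Ω) [IsProbabilityMeasure P]
    (Z : Ω → E) (X Tstar C : Ω → ℝ)
    (hZ : Measurable Z) (hX : Measurable X) (hTstar : Measurable Tstar)
    (hC : Measurable C)
    (hXbin : ∀ ω, X ω = 0 ∨ X ω = 1)
    (t : ℝ)
    (hm' : MeasurableSpace.comap Z inferInstance ≤ mΩ)
    (hci : CondIndepFun (MeasurableSpace.comap Z inferInstance) hm'
      C (fun ω => (Tstar ω, X ω)) P)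
    (I J : E → ℝ) (hI : Measurable I) (hJ : Measurable J)
    (hsurv : P[indGE Tstar t|MeasurableSpace.comap (fun ω => (X ω, Z ω)) inferInstance]
      =ᵐ[P] fun ω => Real.exp (-(X ω * I (Z ω)) - J (Z ω)))
    (π₀ : E → ℝ)
    (hπ₀eq : (fun ω => π₀ (Z ω)) =ᵐ[P] P[X|MeasurableSpace.comap Z inferInstance])
    (hcens : ∀ᵐ ω ∂P,
      0 < (P[indGE C t|MeasurableSpace.comap Z inferInstance]) ω) :
    ∀ᵐ ω ∂P,
      0 < (P[indGE (fun ω' => min (Tstar ω') (C ω')) t|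
          MeasurableSpace.comap Z inferInstance]) ω ∧
      (P[fun ω' => X ω' * indGE (fun ω'' => min (Tstar ω'') (C ω'')) t ω'|
          MeasurableSpace.comap Z inferInstance]) ω /
        (P[indGE (fun ω' => min (Tstar ω') (C ω')) t|
          MeasurableSpace.comap Z inferInstance]) ω
      = π₀ (Z ω) / (π₀ (Z ω) + (1 - π₀ (Z ω)) * Real.exp (I (Z ω))) := by
  have hG : MeasurableSpace.comap (fun ω => (X ω, Z ω)) inferInstance ≤ mΩ :=
    (hX.prodMk hZ).comap_le
  have hZG : Measurable[MeasurableSpace.comap (fun ω => (X ω, Z ω)) inferInstance] Z :=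
    measurable_snd.comp (comap_measurable _)
  have hXG : Measurable[MeasurableSpace.comap (fun ω => (X ω, Z ω)) inferInstance] X :=
    measurable_fst.comp (comap_measurable _)
  have hsurv_mixture : P[indGE Tstar t|MeasurableSpace.comap (fun ω => (X ω, Z ω)) inferInstance]
      =ᵐ[P] fun ω => X ω * Real.exp (-I (Z ω) - J (Z ω)) + (1 - X ω) * Real.exp (-J (Z ω)) := by
    refine hsurv.trans (ae_of_all _ fun ω => ?_)
    rcases hXbin ω with h | h <;> simp [h]
  have ha : StronglyMeasurable[MeasurableSpace.comap Z inferInstance]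
      fun ω => Real.exp (-I (Z ω) - J (Z ω)) :=
    ((hI.neg.sub hJ).exp.comp (comap_measurable Z)).stronglyMeasurable
  have hb : StronglyMeasurable[MeasurableSpace.comap Z inferInstance]
      fun ω => Real.exp (-J (Z ω)) :=
    (hJ.neg.exp.comp (comap_measurable Z)).stronglyMeasurable
  filter_upwards [condExp_indGE_min_eq_mul hTstar hC hX hci t,
    condExp_binary_mul_indGE_min_eq_mul hTstar hC hX hXbin hci t,
    condExp_eq_of_condExp_eq_binary_mixture hZG.comap_le hG hXG hXbin hsurv_mixture ha hb,
    condExp_mul_eq_of_condExp_eq_binary_mixture hZG.comap_le hG hXG hXbin hsurv_mixture ha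
      (integrable_indGE hTstar t),
    hcens, hπ₀eq, condExp_binary_mem_Icc hm' hX hXbin] with ω hR hXR hS hXS hA hπ hπ_mem
  rw [hR, hXR, hS, hXS, ← hπ]
  rw [← hπ] at hπ_mem
  exact exp_mixture_pos_and_ratio_eq hA hπ_mem.1 hπ_mem.2

/-- **Predictable projection for a binary exposure in a multiplicative hazards model.**
If `C ⫫ (T*, X) | σ(Z)`, the conditional survival function of `T*` given `(X, Z)` is
`exp (−X·I(Z) − J(Z))`, `π₀(Z) = E[X | σ(Z)]` and `E[1{C ≥ t} | σ(Z)] > 0` a.s., then,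
with `T = min (T*, C)`, a.s. `E[1{T ≥ t} | σ(Z)] > 0` and
`E[X·1{T ≥ t} | σ(Z)] / E[1{T ≥ t} | σ(Z)] = π₀(Z) / (π₀(Z) + (1 − π₀(Z))·exp (I(Z)))`. -/
theorem binary_predictable_projection
    {Ω E : Type*} [mΩ : MeasurableSpace Ω] [StandardBorelSpace Ω]
    [MeasurableSpace E]
    (P : Measure Ω) [IsProbabilityMeasure P]
    (Z : Ω → E) (X Tstar C : Ω → ℝ)
    (hZ : Measurable Z) (hX : Measurable X) (hTstar : Measurable Tstar)
    (hC : Measurable C)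
    (hXbin : ∀ ω, X ω = 0 ∨ X ω = 1)
    (t : ℝ)
    (hm' : MeasurableSpace.comap Z inferInstance ≤ mΩ)
    (hci : CondIndepFun (MeasurableSpace.comap Z inferInstance) hm'
      C (fun ω => (Tstar ω, X ω)) P)
    (I J : E → ℝ) (hI : Measurable I) (hJ : Measurable J)
    (hsurv : P[indGE Tstar t|MeasurableSpace.comap (fun ω => (X ω, Z ω)) inferInstance]
      =ᵐ[P] fun ω => Real.exp (-(X ω * I (Z ω)) - J (Z ω)))
    (π₀ : E → ℝ) (hπ₀ : Measurable π₀)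
    (hπ₀eq : (fun ω => π₀ (Z ω)) =ᵐ[P] P[X|MeasurableSpace.comap Z inferInstance])
    (hcens : ∀ᵐ ω ∂P,
      0 < (P[indGE C t|MeasurableSpace.comap Z inferInstance]) ω) :
    ∀ᵐ ω ∂P,
      0 < (P[indGE (fun ω' => min (Tstar ω') (C ω')) t|
          MeasurableSpace.comap Z inferInstance]) ω ∧
      (P[fun ω' => X ω' * indGE (fun ω'' => min (Tstar ω'') (C ω'')) t ω'|
          MeasurableSpace.comap Z inferInstance]) ω /
        (P[indGE (fun ω' => min (Tstar ω') (C ω')) t|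
          MeasurableSpace.comap Z inferInstance]) ω
      = π₀ (Z ω) / (π₀ (Z ω) + (1 - π₀ (Z ω)) * Real.exp (I (Z ω))) :=
  binary_predictable_projection_general (mΩ := mΩ) P Z X Tstar C hZ hX hTstar hC hXbin t hm' hci I J
    hI hJ hsurv π₀ hπ₀eq hcens
end

section
/- Let (W_i)_{i∈ℕ} be independent, identically distributed, strongly measurable 𝔻-valued random variables with E‖W₁‖ < ∞. Fix an integer K ≥ 1. For each n ≥ K let {1, …, n} = J^n_1 ∪ ⋯ ∪ J^n_K be a partition into pairwise disjoint sets with |J^n_k| ∈ {⌊n/K⌋, ⌈n/K⌉} for each k. Set S_n := n⁻¹·Σ_{i=1}^n W_i and S_{n,k} := |J^n_k|⁻¹·Σ_{i ∈ J^n_k} W_i. Then for every real r < 1, n^r · E‖ K⁻¹·Σ_{k=1}^K S_{n,k} − S_n ‖ → 0 as n → ∞. -/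
/-!
The difference of the two estimators is a deterministic linear combination of the `W i`:
regrouping `∑_{i<n} W i` along the folds, it equals `∑ₖ (1/(K·|Jₖ|) − 1/n) ∑_{i ∈ Jₖ} W i`.
Since every fold has size within `1` of `n/K`, each coefficient satisfies
`|1/(K·|Jₖ|) − 1/n| · |Jₖ| ≤ 1/n`, so the triangle inequality and identical distribution give
`E‖…‖ ≤ K · E‖W₀‖ / n`, and `n^r · K · E‖W₀‖ / n → 0` for `r < 1`.
-/

open MeasureTheory ProbabilityTheory Filter Topology Finset

section RegroupedSums

variable {ι α E : Type*} [NormedAddCommGroup E] [NormedSpace ℝ E]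

theorem norm_sum_smul_sum_sub_smul_sum_biUnion_le [DecidableEq α] (t : Finset ι)
    (J : ι → Finset α) (hJ : (t : Set ι).PairwiseDisjoint J) (a : ι → ℝ) (b : ℝ) (x : α → E) :
    ‖∑ k ∈ t, a k • ∑ i ∈ J k, x i - b • ∑ i ∈ t.biUnion J, x i‖
      ≤ ∑ k ∈ t, |a k - b| * ∑ i ∈ J k, ‖x i‖ := by
  rw [sum_biUnion hJ, smul_sum, ← sum_sub_distrib]
  refine (norm_sum_le _ _).trans (sum_le_sum fun k _ => ?_)
  rw [← sub_smul, norm_smul, Real.norm_eq_abs]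
  exact mul_le_mul_of_nonneg_left (norm_sum_le _ _) (abs_nonneg _)

theorem integral_norm_sum_smul_sum_sub_smul_sum_biUnion_le [DecidableEq α]
    [MeasurableSpace E] [BorelSpace E] {Ω : Type*} [MeasurableSpace Ω] {μ : Measure Ω}
    (t : Finset ι) (J : ι → Finset α) (hJ : (t : Set ι).PairwiseDisjoint J) (a : ι → ℝ) (b : ℝ)
    (W : α → Ω → E) (X : Ω → E) (hident : ∀ i, IdentDistrib (W i) X μ μ)
    (hX : Integrable X μ) :
    ∫ ω, ‖∑ k ∈ t, a k • ∑ i ∈ J k, W i ω - b • ∑ i ∈ t.biUnion J, W i ω‖ ∂μ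
      ≤ ∑ k ∈ t, |a k - b| * #(J k) * ∫ ω, ‖X ω‖ ∂μ := by
  have hW : ∀ i, Integrable (W i) μ := fun i => (hident i).integrable_iff.mpr hX
  have hfold : ∀ k, Integrable (fun ω => |a k - b| * ∑ i ∈ J k, ‖W i ω‖) μ := fun k =>
    (integrable_finsetSum _ fun i _ => (hW i).norm).const_mul _
  calc _ ≤ ∫ ω, ∑ k ∈ t, |a k - b| * ∑ i ∈ J k, ‖W i ω‖ ∂μ :=
        integral_mono_of_nonneg (Eventually.of_forall fun _ => norm_nonneg _)
          (integrable_finsetSum _ fun k _ => hfold k)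
          (Eventually.of_forall fun ω =>
            norm_sum_smul_sum_sub_smul_sum_biUnion_le t J hJ a b fun i => W i ω)
    _ = _ := by
        rw [integral_finsetSum _ fun k _ => hfold k]
        refine sum_congr rfl fun k _ => ?_
        rw [integral_const_mul, integral_finsetSum _ fun i _ => (hW i).norm,
          sum_congr rfl fun i _ => (hident i).norm.integral_eq, sum_const, nsmul_eq_mul,
          mul_assoc]

end RegroupedSums

theorem abs_natCast_sub_mul_le_of_eq_div_or_ceil {n K m : ℕ} (hK : 0 < K)
    (hm : m = n / K ∨ m = ⌈(n : ℚ) / K⌉₊) : |(n : ℝ) - K * m| ≤ K := by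
  have hKℚ : (0 : ℚ) < K := by exact_mod_cast hK
  suffices h : (n : ℚ) ≤ K * m + K ∧ (K : ℚ) * m ≤ n + K by
    have h₁ : (n : ℝ) ≤ K * m + K := by exact_mod_cast h.1
    have h₂ : (K : ℝ) * m ≤ n + K := by exact_mod_cast h.2
    exact abs_le.mpr ⟨by linarith, by linarith⟩
  rcases hm with rfl | rfl
  · have hdiv : K * (n / K) + n % K = n := Nat.div_add_mod n K
    have hmod : n % K < K := Nat.mod_lt n hK
    exact ⟨by exact_mod_cast (by omega : n ≤ K * (n / K) + K),
      by exact_mod_cast (by omega : K * (n / K) ≤ n + K)⟩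
  · have hle : (n : ℚ) / K ≤ ⌈(n : ℚ) / K⌉₊ := Nat.le_ceil _
    have hlt : (⌈(n : ℚ) / K⌉₊ : ℚ) < n / K + 1 := Nat.ceil_lt_add_one (by positivity)
    have hKn : (K : ℚ) * (n / K) = n := mul_div_cancel₀ _ hKℚ.ne'
    constructor <;>
      linarith [mul_le_mul_of_nonneg_left hle hKℚ.le, mul_lt_mul_of_pos_left hlt hKℚ]

theorem abs_inv_mul_inv_sub_inv_mul_le {K m n : ℝ} (hK : 0 < K) (hm : 0 < m) (hn : 0 < n)
    (h : |n - K * m| ≤ K) : |K⁻¹ * m⁻¹ - n⁻¹| * m ≤ n⁻¹ := by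
  have hcoef : (K⁻¹ * m⁻¹ - n⁻¹) * m = (n - K * m) / (K * n) := by
    field_simp
  calc |K⁻¹ * m⁻¹ - n⁻¹| * m = |n - K * m| / (K * n) := by
        rw [← abs_of_pos (mul_pos hK hn), ← abs_div, ← hcoef, abs_mul, abs_of_pos hm]
    _ ≤ K / (K * n) := by gcongr
    _ = n⁻¹ := by field_simp

theorem integral_norm_crossfit_sub_le {Ω E : Type*} [MeasurableSpace Ω] {μ : Measure Ω}
    [NormedAddCommGroup E] [NormedSpace ℝ E] [MeasurableSpace E] [BorelSpace E]
    (W : ℕ → Ω → E) (X : Ω → E) (hident : ∀ i, IdentDistrib (W i) X μ μ)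
    (hX : Integrable X μ) {K n : ℕ} (hK : 0 < K) (hn : K ≤ n) (J : Fin K → Finset ℕ)
    (hdisj : ∀ k l, k ≠ l → Disjoint (J k) (J l)) (hunion : univ.biUnion J = range n)
    (hcard : ∀ k, #(J k) = n / K ∨ #(J k) = ⌈(n : ℚ) / K⌉₊) :
    ∫ ω, ‖(K : ℝ)⁻¹ • (∑ k, (#(J k) : ℝ)⁻¹ • ∑ i ∈ J k, W i ω)
        - (n : ℝ)⁻¹ • ∑ i ∈ range n, W i ω‖ ∂μ ≤ K * (∫ ω, ‖X ω‖ ∂μ) / n := by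
  have hfold_pos : ∀ k, 0 < #(J k) := fun k => by
    rcases hcard k with h | h <;> rw [h]
    · exact Nat.div_pos hn hK
    · exact Nat.ceil_pos.mpr (div_pos (by exact_mod_cast hK.trans_le hn) (by exact_mod_cast hK))
  have hcoef : ∀ k, |(K : ℝ)⁻¹ * (#(J k) : ℝ)⁻¹ - (n : ℝ)⁻¹| * #(J k) ≤ (n : ℝ)⁻¹ := fun k =>
    abs_inv_mul_inv_sub_inv_mul_le (by exact_mod_cast hK) (by exact_mod_cast hfold_pos k)
      (by exact_mod_cast hK.trans_le hn) (abs_natCast_sub_mul_le_of_eq_div_or_ceil hK (hcard k))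
  simp only [smul_sum (r := (K : ℝ)⁻¹), smul_smul, ← hunion]
  calc _ ≤ ∑ k, |(K : ℝ)⁻¹ * (#(J k) : ℝ)⁻¹ - (n : ℝ)⁻¹| * #(J k) * ∫ ω, ‖X ω‖ ∂μ :=
        integral_norm_sum_smul_sum_sub_smul_sum_biUnion_le univ J
          (fun k _ l _ hkl => hdisj k l hkl) _ _ W X hident hX
    _ ≤ ∑ _k : Fin K, (n : ℝ)⁻¹ * ∫ ω, ‖X ω‖ ∂μ :=
        sum_le_sum fun k _ =>
          mul_le_mul_of_nonneg_right (hcoef k) (integral_nonneg fun _ => norm_nonneg _)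
    _ = _ := by
        rw [sum_const, card_univ, Fintype.card_fin, nsmul_eq_mul]
        ring

theorem crossfit_aggregation_general
    {Ω 𝔻 : Type*} [MeasurableSpace Ω] (P : Measure Ω)
    [NormedAddCommGroup 𝔻] [NormedSpace ℝ 𝔻]
    [MeasurableSpace 𝔻] [BorelSpace 𝔻]
    (W : ℕ → Ω → 𝔻)
    (hident : ∀ i, IdentDistrib (W i) (W 0) P P)
    (hint : Integrable (W 0) P)
    (K : ℕ) (hK : 1 ≤ K)
    (J : ℕ → Fin K → Finset ℕ)
    (hdisj : ∀ n, K ≤ n → ∀ k l : Fin K, k ≠ l → Disjoint (J n k) (J n l))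
    (hunion : ∀ n, K ≤ n → (Finset.univ.biUnion fun k => J n k) = Finset.range n)
    (hcard : ∀ n, K ≤ n → ∀ k,
      (J n k).card = n / K ∨ (J n k).card = Nat.ceil ((n : ℚ) / (K : ℚ))) :
    ∀ r : ℝ, r < 1 →
      Tendsto (fun n : ℕ => (n : ℝ) ^ r *
        ∫ ω, ‖(K : ℝ)⁻¹ • (∑ k : Fin K, ((J n k).card : ℝ)⁻¹ • ∑ i ∈ J n k, W i ω)
          - (n : ℝ)⁻¹ • ∑ i ∈ Finset.range n, W i ω‖ ∂P) atTop (𝓝 0) := by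
  intro r hr
  set M := ∫ ω, ‖W 0 ω‖ ∂P
  have hlim : Tendsto (fun n : ℕ => K * M * (n : ℝ) ^ (r - 1)) atTop (𝓝 0) := by
    simpa [neg_sub] using ((tendsto_rpow_neg_atTop (by linarith : 0 < 1 - r)).comp
      tendsto_natCast_atTop_atTop).const_mul (K * M)
  refine squeeze_zero' (Eventually.of_forall fun n => by positivity) ?_ hlim
  filter_upwards [eventually_ge_atTop K] with n hn
  have hn_pos : (0 : ℝ) < n := by exact_mod_cast hK.trans hn
  calc _ ≤ (n : ℝ) ^ r * (K * M / n) :=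
        mul_le_mul_of_nonneg_left (integral_norm_crossfit_sub_le W (W 0) hident hint hK hn
          (J n) (hdisj n hn) (hunion n hn) (hcard n hn)) (by positivity)
    _ = K * M * (n : ℝ) ^ (r - 1) := by
        rw [Real.rpow_sub_one hn_pos.ne']
        ring

/-- **Cross-fitting aggregation lemma in Banach spaces.** For i.i.d. integrable `𝔻`-valued
random variables and `K`-fold partitions of `{0, …, n−1}` into folds of size `⌊n/K⌋` or
`⌈n/K⌉`, the average of the fold-wise empirical means differs from the full empirical mean
by `o(n^{−r})` in mean, for every `r < 1`. -/
theorem crossfit_aggregation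
    {Ω 𝔻 : Type*} [MeasurableSpace Ω] (P : Measure Ω) [IsProbabilityMeasure P]
    [NormedAddCommGroup 𝔻] [NormedSpace ℝ 𝔻] [CompleteSpace 𝔻]
    [MeasurableSpace 𝔻] [BorelSpace 𝔻]
    (W : ℕ → Ω → 𝔻)
    (hmeas : ∀ i, StronglyMeasurable (W i))
    (hindep : iIndepFun W P)
    (hident : ∀ i, IdentDistrib (W i) (W 0) P P)
    (hint : Integrable (W 0) P)
    (K : ℕ) (hK : 1 ≤ K)
    (J : ℕ → Fin K → Finset ℕ)
    (hdisj : ∀ n, K ≤ n → ∀ k l : Fin K, k ≠ l → Disjoint (J n k) (J n l))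
    (hunion : ∀ n, K ≤ n → (Finset.univ.biUnion fun k => J n k) = Finset.range n)
    (hcard : ∀ n, K ≤ n → ∀ k,
      (J n k).card = n / K ∨ (J n k).card = Nat.ceil ((n : ℚ) / (K : ℚ))) :
    ∀ r : ℝ, r < 1 →
      Tendsto (fun n : ℕ => (n : ℝ) ^ r *
        ∫ ω, ‖(K : ℝ)⁻¹ • (∑ k : Fin K, ((J n k).card : ℝ)⁻¹ • ∑ i ∈ J n k, W i ω)
          - (n : ℝ)⁻¹ • ∑ i ∈ Finset.range n, W i ω‖ ∂P) atTop (𝓝 0) :=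
  crossfit_aggregation_general P W hident hint K hK J hdisj hunion hcard
end

section
/- Let Y be a real random variable taking values in a bounded interval [a, b] almost surely and satisfying E[Y | 𝒢] = 0 almost surely. Then for every x ∈ ℝ, E[e^{x·Y} | 𝒢] ≤ exp( (b − a)²·x² / 8 ) almost surely. -/
open MeasureTheory ProbabilityTheory

open Real in
lemma hoeffding_scalar (p t : ℝ) (hp0 : 0 ≤ p) (hp1 : p ≤ 1) :
    (1 - p) * exp (-p * t) + p * exp ((1 - p) * t) ≤ exp (t ^ 2 / 8) := by
  set q : ℝ := 1 - p with hq
  have hq0 : 0 ≤ q := by simp [hq]; linarith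
  set D : ℝ → ℝ := fun s => q * exp (-p * s) + p * exp (q * s) with hDdef
  have hDpos : ∀ s, 0 < D s := by
    intro s
    rcases eq_or_lt_of_le hp0 with h | h
    · simp [hDdef, ← h, hq]
    · have h1 : 0 < p * exp (q * s) := by positivity
      have h2 : 0 ≤ q * exp (-p * s) := by positivity
      simp only [hDdef]; linarith
  set D1 : ℝ → ℝ := fun s => p * q * (exp (q * s) - exp (-p * s)) with hD1def
  set D2 : ℝ → ℝ := fun s => p * q * (q * exp (q * s) + p * exp (-p * s)) with hD2def
  have hDder : ∀ s, HasDerivAt D (D1 s) s := by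
    intro s
    have h1 : HasDerivAt (fun s : ℝ => exp (-p * s)) (exp (-p * s) * (-p)) s := by
      simpa using ((hasDerivAt_id s).const_mul (-p)).exp
    have h2 : HasDerivAt (fun s : ℝ => exp (q * s)) (exp (q * s) * q) s := by
      simpa using ((hasDerivAt_id s).const_mul q).exp
    have := (h1.const_mul q).add (h2.const_mul p)
    refine this.congr_deriv ?_
    simp only [hD1def]; ring
  have hD1der : ∀ s, HasDerivAt D1 (D2 s) s := by
    intro s
    have h1 : HasDerivAt (fun s : ℝ => exp (-p * s)) (exp (-p * s) * (-p)) s := by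
      simpa using ((hasDerivAt_id s).const_mul (-p)).exp
    have h2 : HasDerivAt (fun s : ℝ => exp (q * s)) (exp (q * s) * q) s := by
      simpa using ((hasDerivAt_id s).const_mul q).exp
    have := (h2.sub h1).const_mul (p * q)
    refine this.congr_deriv ?_
    simp only [hD2def]; ring
  set φ : ℝ → ℝ := fun s => s / 4 - D1 s / D s with hφdef
  have hφder : ∀ s, HasDerivAt φ
      (1 / 4 - (D2 s * D s - D1 s * D1 s) / (D s) ^ 2) s := by
    intro s
    exact ((hasDerivAt_id s).div_const 4).sub
      (((hD1der s).div (hDder s) (hDpos s).ne'))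
  have hψ : ∀ s, 0 ≤ 1 / 4 - (D2 s * D s - D1 s * D1 s) / (D s) ^ 2 := by
    intro s
    rw [sub_nonneg, div_le_iff₀ (pow_pos (hDpos s) 2)]
    have hA := exp_pos (q * s)
    have hB := exp_pos (-p * s)
    simp only [hDdef, hD1def, hD2def, hq]
    nlinarith [sq_nonneg ((1 - p) * exp (-p * s) - p * exp ((1 - p) * s)),
      mul_pos hA hB, sq_nonneg (exp ((1-p)*s) - exp (-p*s))]
  have hφmono : Monotone φ := by
    apply monotone_of_deriv_nonneg (fun s => (hφder s).differentiableAt)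
    intro s
    rw [(hφder s).deriv]
    exact hψ s
  have hφ0 : φ 0 = 0 := by simp [hφdef, hD1def]
  set F : ℝ → ℝ := fun s => s ^ 2 / 8 - log (D s) with hFdef
  have hFder : ∀ s, HasDerivAt F (φ s) s := by
    intro s
    have h1 : HasDerivAt (fun s : ℝ => s ^ 2 / 8) (2 * s ^ 1 / 8) s :=
      (hasDerivAt_pow 2 s).div_const 8
    have h2 : HasDerivAt (fun s => log (D s)) (D1 s / D s) s :=
      (hDder s).log (hDpos s).ne'
    refine (h1.sub h2).congr_deriv ?_
    simp only [hφdef]; ring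
  have hF0 : F 0 = 0 := by
    simp [hFdef, hDdef, hq]
  have hFcont : Continuous F := by
    have : Differentiable ℝ F := fun s => (hFder s).differentiableAt
    exact this.continuous
  have hFnonneg : ∀ s, 0 ≤ F s := by
    intro s
    rcases le_total 0 s with hs | hs
    · have hmono : MonotoneOn F (Set.Ici 0) := by
        apply monotoneOn_of_deriv_nonneg (convex_Ici 0) hFcont.continuousOn
          (fun x _ => (hFder x).differentiableAt.differentiableWithinAt)
        intro x hx
        rw [(hFder x).deriv]
        rw [← hφ0]
        exact hφmono (le_of_lt (by simpa using hx))
      have := hmono (Set.self_mem_Ici) (by exact hs) hs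
      rwa [hF0] at this
    · have hmono : AntitoneOn F (Set.Iic 0) := by
        apply antitoneOn_of_deriv_nonpos (convex_Iic 0) hFcont.continuousOn
          (fun x _ => (hFder x).differentiableAt.differentiableWithinAt)
        intro x hx
        rw [(hFder x).deriv]
        rw [← hφ0]
        exact hφmono (le_of_lt (by simpa using hx))
      have := hmono (by exact hs) (Set.self_mem_Iic) hs
      rwa [hF0] at this
  have := hFnonneg t
  rw [hFdef] at this
  have hlog : log (D t) ≤ t ^ 2 / 8 := by linarith [this]
  have := (log_le_iff_le_exp (hDpos t)).mp hlog
  calc (1 - p) * exp (-p * t) + p * exp ((1 - p) * t) = D t := by simp [hDdef, hq]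
    _ ≤ exp (t ^ 2 / 8) := this

open MeasureTheory ProbabilityTheory

/-- **Conditional Hoeffding's lemma.** If `Y` takes values in `[a, b]` almost surely and
`E[Y | 𝒢] = 0` almost surely, then for every `x : ℝ`,
`E[exp (x * Y) | 𝒢] ≤ exp ((b - a)^2 * x^2 / 8)` almost surely. -/
theorem conditional_hoeffding
    {Ω : Type*} {𝒢 : MeasurableSpace Ω} [mΩ : MeasurableSpace Ω] (P : Measure Ω) [IsProbabilityMeasure P]
    (h𝒢 : 𝒢 ≤ mΩ)
    (Y : Ω → ℝ) (hYmeas : Measurable Y)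
    (a b : ℝ) (hab : a ≤ b)
    (hbound : ∀ᵐ ω ∂P, Y ω ∈ Set.Icc a b)
    (hcond : P[Y|𝒢] =ᵐ[P] 0) :
    ∀ x : ℝ, ∀ᵐ ω ∂P,
      (P[fun ω' => Real.exp (x * Y ω')|𝒢]) ω ≤ Real.exp ((b - a) ^ 2 * x ^ 2 / 8) := by
  intro x
  haveI : Filter.NeBot (ae P) := ae_neBot.mpr (IsProbabilityMeasure.ne_zero P)
  have hYm : @Measurable Ω ℝ mΩ _ Y := hYmeas
  have hYint : Integrable Y P := by
    refine (integrable_const (max |a| |b|)).mono' (hYm.aestronglyMeasurable (μ := P)) ?_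
    filter_upwards [hbound] with ω h
    rw [Real.norm_eq_abs, abs_le]
    constructor
    · calc -(max |a| |b|) ≤ -|a| := neg_le_neg (le_max_left _ _)
        _ ≤ a := neg_abs_le a
        _ ≤ Y ω := h.1
    · calc Y ω ≤ b := h.2
        _ ≤ |b| := le_abs_self b
        _ ≤ max |a| |b| := le_max_right _ _
  have ha0 : a ≤ 0 := by
    have h1 : P[(fun _ => a : Ω → ℝ)|𝒢] ≤ᵐ[P] P[Y|𝒢] :=
      condExp_mono (integrable_const a) hYint (hbound.mono fun ω h => h.1)
    have h2 : ∀ᵐ ω ∂P, a ≤ (0 : Ω → ℝ) ω := by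
      filter_upwards [h1, hcond] with ω e1 e2
      rw [← e2]
      simpa [condExp_const h𝒢] using e1
    obtain ⟨ω, hω⟩ := h2.exists
    simpa using hω
  have hb0 : 0 ≤ b := by
    have h1 : P[Y|𝒢] ≤ᵐ[P] P[(fun _ => b : Ω → ℝ)|𝒢] :=
      condExp_mono hYint (integrable_const b) (hbound.mono fun ω h => h.2)
    have h2 : ∀ᵐ ω ∂P, (0 : Ω → ℝ) ω ≤ b := by
      filter_upwards [h1, hcond] with ω e1 e2
      rw [← e2]
      simpa [condExp_const h𝒢] using e1
    obtain ⟨ω, hω⟩ := h2.exists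
    simpa using hω
  rcases eq_or_lt_of_le hab with hab' | hab'
  · -- degenerate case a = b, hence a = b = 0
    have ha : a = 0 := le_antisymm ha0 (hab' ▸ hb0)
    have hb : b = 0 := hab' ▸ ha
    have hY0 : Y =ᵐ[P] fun _ => (0 : ℝ) := by
      filter_upwards [hbound] with ω h
      have := h.1; have := h.2
      subst ha; subst hb
      exact le_antisymm h.2 h.1
    have he : (fun ω' => Real.exp (x * Y ω')) =ᵐ[P] fun _ => (1 : ℝ) := by
      filter_upwards [hY0] with ω h
      simp [h]
    have := (condExp_congr_ae (m := 𝒢) he).trans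
      (Filter.EventuallyEq.of_eq (condExp_const h𝒢 (1 : ℝ)))
    filter_upwards [this] with ω hω
    rw [hω]
    exact Real.one_le_exp (by positivity)
  · -- main case a < b
    have hba : (0 : ℝ) < b - a := by linarith
    set p : ℝ := -a / (b - a) with hp
    set t : ℝ := x * (b - a) with ht
    have hp0 : 0 ≤ p := by
      apply div_nonneg (by linarith) (le_of_lt hba)
    have hp1 : p ≤ 1 := by
      rw [hp, div_le_one hba]; linarith
    have hkey := hoeffding_scalar p t hp0 hp1
    set c1 : ℝ := (b * Real.exp (x * a) - a * Real.exp (x * b)) / (b - a) with hc1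
    set c2 : ℝ := (Real.exp (x * b) - Real.exp (x * a)) / (b - a) with hc2
    have hLHS : (1 - p) * Real.exp (-p * t) + p * Real.exp ((1 - p) * t) = c1 := by
      have h1 : -p * t = x * a := by rw [hp, ht]; field_simp
      have h2 : (1 - p) * t = x * b := by rw [hp, ht]; field_simp; ring
      rw [h1, h2, hc1, hp]
      field_simp
      ring
    have hRHS : t ^ 2 / 8 = (b - a) ^ 2 * x ^ 2 / 8 := by rw [ht]; ring
    rw [hLHS, hRHS] at hkey
    -- pointwise convexity bound
    have hpoint : ∀ᵐ ω ∂P, Real.exp (x * Y ω) ≤ c1 + c2 * Y ω := by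
      filter_upwards [hbound] with ω h
      have hw1 : 0 ≤ (b - Y ω) / (b - a) := div_nonneg (by linarith [h.2]) hba.le
      have hw2 : 0 ≤ (Y ω - a) / (b - a) := div_nonneg (by linarith [h.1]) hba.le
      have hsum : (b - Y ω) / (b - a) + (Y ω - a) / (b - a) = 1 := by
        field_simp
        ring
      have hcx := convexOn_exp.2 (Set.mem_univ (x * a)) (Set.mem_univ (x * b)) hw1 hw2 hsum
      have harg : ((b - Y ω) / (b - a)) • (x * a) + ((Y ω - a) / (b - a)) • (x * b) = x * Y ω := by
        simp only [smul_eq_mul]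
        field_simp
        ring
      rw [harg] at hcx
      refine hcx.trans (le_of_eq ?_)
      simp only [smul_eq_mul, hc1, hc2]
      field_simp
      ring
    have heint : Integrable (fun ω => Real.exp (x * Y ω)) P := by
      refine (integrable_const (Real.exp (max (x * a) (x * b)))).mono'
        ((Measurable.aestronglyMeasurable (μ := P) (m := mΩ) (Real.measurable_exp.comp (hYm.const_mul x)) :
          AEStronglyMeasurable[mΩ] (Real.exp ∘ fun ω => x * Y ω) P) :
          AEStronglyMeasurable[mΩ] (fun ω => Real.exp (x * Y ω)) P) ?_
      filter_upwards [hbound] with ω h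
      rw [Real.norm_eq_abs, abs_of_pos (Real.exp_pos _)]
      apply Real.exp_le_exp.mpr
      rcases le_total 0 x with hx | hx
      · exact le_max_of_le_right (by nlinarith [h.2])
      · exact le_max_of_le_left (by nlinarith [h.1])
    have hgint : Integrable (fun ω => c1 + c2 * Y ω) P :=
      (integrable_const c1).add (hYint.const_mul c2)
    have hmono := condExp_mono (m := 𝒢) heint hgint hpoint
    have hsplit : P[(fun ω => c1 + c2 * Y ω)|𝒢] =ᵐ[P] fun _ => c1 := by
      have e1 : (fun ω => c1 + c2 * Y ω) = (fun _ => c1) + c2 • Y := by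
        funext ω; simp [smul_eq_mul]
      rw [e1]
      have h2 := condExp_add (m := 𝒢) (μ := P) (integrable_const c1) (hYint.smul c2)
      refine h2.trans ?_
      have h3 := condExp_smul (m := 𝒢) (μ := P) c2 Y
      have h4 : P[(fun _ => c1 : Ω → ℝ)|𝒢] = fun _ => c1 := condExp_const h𝒢 c1
      filter_upwards [h3, hcond] with ω e3 e4
      simp only [Pi.add_apply, e3, Pi.smul_apply, e4, Pi.zero_apply, smul_eq_mul,
        mul_zero, add_zero]
      exact congrFun h4 ω
    filter_upwards [hmono, hsplit] with ω e1 e2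
    calc (P[fun ω' => Real.exp (x * Y ω')|𝒢]) ω ≤ (P[(fun ω => c1 + c2 * Y ω)|𝒢]) ω := e1
      _ = c1 := e2
      _ ≤ Real.exp ((b - a) ^ 2 * x ^ 2 / 8) := hkey
end

section
/- Let (𝔻, d) be a metric space and let X^θ, X_n^θ, Y_n^θ : Ω → 𝔻 (θ ∈ Θ, n ∈ ℕ) be Borel-measurable maps. Assume there is a separable subset 𝔻₀ ⊆ 𝔻 with ℙ(X^θ ∈ 𝔻₀) = 1 for all θ ∈ Θ, and that ω ↦ d(X_n^θ(ω), Y_n^θ(ω)) is measurable for all n and θ. If sup_{θ∈Θ} d_BL(X_n^θ, X^θ) → 0 as n → ∞ and, for every ε > 0, sup_{θ∈Θ} ℙ( d(X_n^θ, Y_n^θ) > ε ) → 0 as n → ∞, then sup_{θ∈Θ} d_BL(Y_n^θ, X^θ) → 0 as n → ∞. -/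
/-! Off the event `{d(X_n^θ, Y_n^θ) > δ}` a bounded 1-Lipschitz test function changes by at most
`δ` when `X_n^θ` is replaced by `Y_n^θ`, and on it by at most `2`. Hence
`d_BL(Y_n^θ, X^θ) ≤ d_BL(X_n^θ, X^θ) + δ + 2 ℙ(d(X_n^θ, Y_n^θ) > δ)`, and the supremum over `θ`
of the right-hand side is eventually small once `δ` is small. -/

open MeasureTheory Filter Topology

noncomputable def dBL {Ω 𝔻 : Type*} [MeasurableSpace Ω] (P : Measure Ω)
    [PseudoMetricSpace 𝔻] (X Y : Ω → 𝔻) : ℝ :=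
  ⨆ f : {f : 𝔻 → ℝ // (∀ x, |f x| ≤ 1) ∧ LipschitzWith 1 f},
    |(∫ ω, f.1 (X ω) ∂P) - ∫ ω, f.1 (Y ω) ∂P|

section BoundedLipschitz

variable {Ω : Type*} [MeasurableSpace Ω] (P : Measure Ω)

lemma abs_sub_le_two_of_abs_le_one {a b : ℝ} (ha : |a| ≤ 1) (hb : |b| ≤ 1) : |a - b| ≤ 2 :=
  (abs_sub a b).trans (by linarith)

lemma abs_integral_le_one [IsProbabilityMeasure P] {g : Ω → ℝ} (hg : ∀ ω, |g ω| ≤ 1) :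
    |∫ ω, g ω ∂P| ≤ 1 := by
  simpa using norm_integral_le_of_norm_le_const (μ := P) (f := g) (C := 1)
    (Eventually.of_forall fun ω => by simpa using hg ω)

lemma abs_integral_sub_integral_le_two [IsProbabilityMeasure P] {α : Type*} {f : α → ℝ}
    (hf : ∀ x, |f x| ≤ 1) (X Y : Ω → α) :
    |(∫ ω, f (X ω) ∂P) - ∫ ω, f (Y ω) ∂P| ≤ 2 :=
  abs_sub_le_two_of_abs_le_one (abs_integral_le_one P fun _ => hf _)
    (abs_integral_le_one P fun _ => hf _)

variable {𝔻 : Type*} [PseudoMetricSpace 𝔻]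

lemma dBL_le_of_forall {X Y : Ω → 𝔻} {c : ℝ} (hc : 0 ≤ c)
    (h : ∀ f : 𝔻 → ℝ, (∀ x, |f x| ≤ 1) → LipschitzWith 1 f →
      |(∫ ω, f (X ω) ∂P) - ∫ ω, f (Y ω) ∂P| ≤ c) : dBL P X Y ≤ c :=
  Real.iSup_le (fun f => h f.1 f.2.1 f.2.2) hc

lemma dBL_nonneg (X Y : Ω → 𝔻) : 0 ≤ dBL P X Y :=
  Real.iSup_nonneg fun _ => abs_nonneg _

variable [IsProbabilityMeasure P]

lemma dBL_le_two (X Y : Ω → 𝔻) : dBL P X Y ≤ 2 :=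
  dBL_le_of_forall P zero_le_two fun _ hf _ => abs_integral_sub_integral_le_two P hf X Y

lemma abs_integral_sub_integral_le_dBL {f : 𝔻 → ℝ} (hf : ∀ x, |f x| ≤ 1)
    (hf' : LipschitzWith 1 f) (X Y : Ω → 𝔻) :
    |(∫ ω, f (X ω) ∂P) - ∫ ω, f (Y ω) ∂P| ≤ dBL P X Y :=
  le_ciSup (f := fun f : {f : 𝔻 → ℝ // (∀ x, |f x| ≤ 1) ∧ LipschitzWith 1 f} =>
      |(∫ ω, f.1 (X ω) ∂P) - ∫ ω, f.1 (Y ω) ∂P|)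
    ⟨2, by rintro _ ⟨g, rfl⟩; exact abs_integral_sub_integral_le_two P g.2.1 X Y⟩ ⟨f, hf, hf'⟩

lemma dBL_le_iSup_dBL {Θ : Type*} (X Y : Θ → Ω → 𝔻) (θ : Θ) :
    dBL P (X θ) (Y θ) ≤ ⨆ θ, dBL P (X θ) (Y θ) :=
  le_ciSup (f := fun θ => dBL P (X θ) (Y θ)) ⟨2, by rintro _ ⟨θ, rfl⟩; exact dBL_le_two P _ _⟩ θ

variable [MeasurableSpace 𝔻] [OpensMeasurableSpace 𝔻]

lemma abs_integral_sub_integral_le_of_lipschitz {f : 𝔻 → ℝ} (hf : ∀ x, |f x| ≤ 1)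
    (hf' : LipschitzWith 1 f) {Z W : Ω → 𝔻} (hZ : Measurable Z) (hW : Measurable W)
    (hd : Measurable fun ω => dist (Z ω) (W ω)) {δ : ℝ} (hδ : 0 ≤ δ) :
    |(∫ ω, f (Z ω) ∂P) - ∫ ω, f (W ω) ∂P| ≤ δ + 2 * P.real {ω | δ < dist (Z ω) (W ω)} := by
  set A := {ω | δ < dist (Z ω) (W ω)}
  have hA : MeasurableSet A := measurableSet_lt measurable_const hd
  have hfZ : Integrable (fun ω => f (Z ω)) P :=
    .of_bound (hf'.continuous.measurable.comp hZ).aestronglyMeasurable 1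
      (Eventually.of_forall fun ω => hf (Z ω))
  have hfW : Integrable (fun ω => f (W ω)) P :=
    .of_bound (hf'.continuous.measurable.comp hW).aestronglyMeasurable 1
      (Eventually.of_forall fun ω => hf (W ω))
  have hpointwise : ∀ ω, |f (Z ω) - f (W ω)| ≤ δ + A.indicator (fun _ => (2 : ℝ)) ω := by
    intro ω
    by_cases hω : ω ∈ A
    · rw [Set.indicator_of_mem hω]
      linarith [abs_sub_le_two_of_abs_le_one (hf (Z ω)) (hf (W ω))]
    · have hclose : dist (Z ω) (W ω) ≤ δ := not_lt.mp hω
      rw [Set.indicator_of_notMem hω, add_zero, ← Real.dist_eq]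
      exact (hf'.dist_le_mul _ _).trans (by simpa using hclose)
  calc |(∫ ω, f (Z ω) ∂P) - ∫ ω, f (W ω) ∂P|
      = |∫ ω, (f (Z ω) - f (W ω)) ∂P| := by rw [integral_sub hfZ hfW]
    _ ≤ ∫ ω, |f (Z ω) - f (W ω)| ∂P := abs_integral_le_integral_abs
    _ ≤ ∫ ω, (δ + A.indicator (fun _ => (2 : ℝ)) ω) ∂P :=
        integral_mono (hfZ.sub hfW).abs
          ((integrable_const δ).add ((integrable_const 2).indicator hA)) hpointwise
    _ = δ + 2 * P.real A := by
        rw [integral_add (integrable_const δ) ((integrable_const 2).indicator hA),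
          integral_const, integral_indicator_const _ hA]
        simp [mul_comm]

lemma dBL_le_dBL_add_of_dist_le {Z W : Ω → 𝔻} (hZ : Measurable Z) (hW : Measurable W)
    (hd : Measurable fun ω => dist (Z ω) (W ω)) {δ : ℝ} (hδ : 0 ≤ δ) (X : Ω → 𝔻) :
    dBL P W X ≤ dBL P Z X + δ + 2 * P.real {ω | δ < dist (Z ω) (W ω)} := by
  refine dBL_le_of_forall P (add_nonneg (add_nonneg (dBL_nonneg P Z X) hδ) (by positivity))
    fun f hf hf' => ?_
  have hZW := abs_integral_sub_integral_le_of_lipschitz P hf hf' hZ hW hd hδ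
  rw [abs_sub_comm] at hZW
  calc |(∫ ω, f (W ω) ∂P) - ∫ ω, f (X ω) ∂P|
      ≤ |(∫ ω, f (W ω) ∂P) - ∫ ω, f (Z ω) ∂P| + |(∫ ω, f (Z ω) ∂P) - ∫ ω, f (X ω) ∂P| :=
        abs_sub_le _ _ _
    _ ≤ _ := by linarith [abs_integral_sub_integral_le_dBL P hf hf' Z X]

end BoundedLipschitz

theorem uniform_slutsky_general
    {Ω 𝔻 Θ : Type*} [MeasurableSpace Ω] (P : Measure Ω) [IsProbabilityMeasure P]
    [MetricSpace 𝔻] [MeasurableSpace 𝔻] [BorelSpace 𝔻]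
    (X : Θ → Ω → 𝔻) (Xn Yn : ℕ → Θ → Ω → 𝔻)
    (hXn : ∀ n θ, Measurable (Xn n θ))
    (hYn : ∀ n θ, Measurable (Yn n θ))
    (hdistmeas : ∀ n θ, Measurable fun ω => dist (Xn n θ ω) (Yn n θ ω))
    (hXconv : Tendsto (fun n => ⨆ θ, dBL P (Xn n θ) (X θ)) atTop (𝓝 0))
    (hprob : ∀ ε > (0 : ℝ),
      Tendsto (fun n => ⨆ θ, P {ω | ε < dist (Xn n θ ω) (Yn n θ ω)}) atTop (𝓝 0)) :
    Tendsto (fun n => ⨆ θ, dBL P (Yn n θ) (X θ)) atTop (𝓝 0) := by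
  rw [NormedAddGroup.tendsto_nhds_zero]
  intro ε hε
  filter_upwards [hXconv.eventually_lt_const (by positivity : 0 < ε / 4),
    (hprob (ε / 4) (by positivity)).eventually_lt_const
      (ENNReal.ofReal_pos.mpr (by positivity : 0 < ε / 8))] with n hXn_close hfar
  have hθ : ∀ θ, dBL P (Yn n θ) (X θ) ≤ 3 * ε / 4 := fun θ => by
    have hXθ := (dBL_le_iSup_dBL P (Xn n) X θ).trans_lt hXn_close
    have hfarθ : P.real {ω | ε / 4 < dist (Xn n θ ω) (Yn n θ ω)} < ε / 8 :=
      (ENNReal.lt_ofReal_iff_toReal_lt (measure_ne_top _ _)).mp ((le_iSup _ θ).trans_lt hfar)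
    linarith [dBL_le_dBL_add_of_dist_le P (hXn n θ) (hYn n θ) (hdistmeas n θ)
      (by positivity : 0 ≤ ε / 4) (X θ)]
  rw [Real.norm_of_nonneg (Real.iSup_nonneg fun θ => dBL_nonneg P _ _)]
  exact (Real.iSup_le hθ (by positivity)).trans_lt (by linarith)

/-- **Uniform Slutsky theorem in metric spaces.** If `X_n^θ → X^θ` uniformly in distribution
over `Θ` and `d(X_n^θ, Y_n^θ) → 0` uniformly in probability over `Θ`, then
`Y_n^θ → X^θ` uniformly in distribution over `Θ`. -/
theorem uniform_slutsky
    {Ω 𝔻 Θ : Type*} [MeasurableSpace Ω] (P : Measure Ω) [IsProbabilityMeasure P]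
    [MetricSpace 𝔻] [MeasurableSpace 𝔻] [BorelSpace 𝔻] [Nonempty Θ]
    (X : Θ → Ω → 𝔻) (Xn Yn : ℕ → Θ → Ω → 𝔻)
    (hX : ∀ θ, Measurable (X θ)) (hXn : ∀ n θ, Measurable (Xn n θ))
    (hYn : ∀ n θ, Measurable (Yn n θ))
    (hsep : ∃ 𝔻₀ : Set 𝔻, TopologicalSpace.IsSeparable 𝔻₀ ∧ ∀ θ, ∀ᵐ ω ∂P, X θ ω ∈ 𝔻₀)
    (hdistmeas : ∀ n θ, Measurable fun ω => dist (Xn n θ ω) (Yn n θ ω))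
    (hXconv : Tendsto (fun n => ⨆ θ, dBL P (Xn n θ) (X θ)) atTop (𝓝 0))
    (hprob : ∀ ε > (0 : ℝ),
      Tendsto (fun n => ⨆ θ, P {ω | ε < dist (Xn n θ ω) (Yn n θ ω)}) atTop (𝓝 0)) :
    Tendsto (fun n => ⨆ θ, dBL P (Yn n θ) (X θ)) atTop (𝓝 0) :=
  uniform_slutsky_general P X Xn Yn hXn hYn hdistmeas hXconv hprob
end

section
/- For each n ∈ ℕ and θ ∈ Θ let X_n^θ : [0,1] × Ω → ℝ be such that X_n^θ(t, ·) is measurable for each t ∈ [0,1] and every sample path t ↦ X_n^θ(t, ω) is nondecreasing. Let (f^θ)_{θ∈Θ} be a family of nondecreasing continuous functions [0,1] → ℝ that is uniformly equicontinuous: for every ε > 0 there exists δ > 0 such that |f^θ(s) − f^θ(t)| < ε for all θ ∈ Θ and all s, t ∈ [0,1] with |s − t| ≤ δ. If for every t ∈ [0,1] and every ε > 0, sup_{θ∈Θ} ℙ( |X_n^θ(t) − f^θ(t)| > ε ) → 0 as n → ∞, then for every ε > 0, sup_{θ∈Θ} ℙ( sup_{t∈[0,1]} |X_n^θ(t) −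 f^θ(t)| > ε ) → 0 as n → ∞. -/
/-!
Equicontinuity yields one finite grid of `[0,1]`, fine enough that every `f^θ` varies by at most
`ε/2` between neighbouring grid points. Since `X_n^θ(·, ω)` and `f^θ` are both nondecreasing, the
error at any `t` is sandwiched between the errors at the two grid points around `t`, up to that
variation. So the uniform error exceeds `ε` only if the error at some grid point exceeds `ε/2`,
and a union bound over the finitely many grid points reduces to the pointwise hypothesis.
-/

open MeasureTheory Filter Topology

section

open Set Finset

theorem exists_finset_bracket_Icc {a b δ : ℝ} (h : a ≤ b) (hδ : 0 < δ) :
    ∃ G : Finset (Icc a b), ∀ t, ∃ s ∈ G, ∃ u ∈ G, s ≤ t ∧ t ≤ u ∧ dist u s ≤ δ := by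
  obtain ⟨m, hm⟩ := Icc.addNSMul_eq_right h hδ
  refine ⟨(range (m + 1)).image (Icc.addNSMul h δ), fun t => ?_⟩
  have hG : ∀ k, Icc.addNSMul h δ k ∈ (range (m + 1)).image (Icc.addNSMul h δ) := fun k => by
    rcases le_or_gt k m with hk | hk
    · exact mem_image_of_mem _ (mem_range.2 (Nat.lt_succ_of_le hk))
    · rw [Subtype.ext ((hm k hk.le).trans (hm m le_rfl).symm)]
      exact mem_image_of_mem _ (mem_range.2 m.lt_succ_self)
  set n := ⌊(t - a) / δ⌋₊
  have hta : 0 ≤ (t - a) / δ := div_nonneg (sub_nonneg.2 t.2.1) hδ.le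
  have hs : Icc.addNSMul h δ n ≤ t := by
    rw [← projIcc_val h t]
    refine monotone_projIcc h ?_
    have := (le_div_iff₀ hδ).1 (Nat.floor_le hta)
    simp only [nsmul_eq_mul]
    linarith
  have hu : t ≤ Icc.addNSMul h δ (n + 1) := by
    rw [← projIcc_val h t]
    refine monotone_projIcc h ?_
    have := (div_lt_iff₀ hδ).1 (Nat.lt_floor_add_one ((t - a) / δ))
    simp only [nsmul_eq_mul]
    push_cast
    linarith
  refine ⟨_, hG n, _, hG (n + 1), hs, hu, ?_⟩
  rw [Subtype.dist_eq, Real.dist_eq]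
  exact Icc.abs_sub_addNSMul_le h hδ.le n ⟨hs.trans hu, le_rfl⟩

end

theorem iSup_abs_sub_le_of_bracket {T : Type*} [Preorder T] [Nonempty T] {x g : T → ℝ}
    (hx : Monotone x) (hg : Monotone g) {G : Set T} {ε η : ℝ}
    (hbracket : ∀ t, ∃ s ∈ G, ∃ u ∈ G, s ≤ t ∧ t ≤ u ∧ g u - g s ≤ η)
    (hG : ∀ s ∈ G, |x s - g s| ≤ ε) :
    ⨆ t, |x t - g t| ≤ ε + η := by
  refine ciSup_le fun t => ?_
  obtain ⟨s, hsG, u, huG, hst, htu, hosc⟩ := hbracket t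
  have hs := abs_le.1 (hG s hsG)
  have hu := abs_le.1 (hG u huG)
  have hxt : x s ≤ x t ∧ x t ≤ x u := ⟨hx hst, hx htu⟩
  have hgt : g s ≤ g t ∧ g t ≤ g u := ⟨hg hst, hg htu⟩
  exact abs_le.2 ⟨by linarith, by linarith⟩

theorem tendsto_iSup_measure_of_subset_biUnion {Ω Θ ι : Type*} [MeasurableSpace Ω]
    (μ : Measure Ω) (G : Finset ι) {A : ℕ → Θ → Set Ω} {B : ℕ → Θ → ι → Set Ω}
    (hB : ∀ i ∈ G, Tendsto (fun n => ⨆ θ, μ (B n θ i)) atTop (𝓝 0))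
    (hAB : ∀ n θ, A n θ ⊆ ⋃ i ∈ G, B n θ i) :
    Tendsto (fun n => ⨆ θ, μ (A n θ)) atTop (𝓝 0) := by
  have hsum : Tendsto (fun n => ∑ i ∈ G, ⨆ θ, μ (B n θ i)) atTop (𝓝 0) := by
    simpa using tendsto_finsetSum G hB
  refine tendsto_of_tendsto_of_tendsto_of_le_of_le tendsto_const_nhds hsum (fun n => zero_le)
    fun n => iSup_le fun θ => ?_
  calc μ (A n θ) ≤ μ (⋃ i ∈ G, B n θ i) := measure_mono (hAB n θ)
    _ ≤ ∑ i ∈ G, μ (B n θ i) := measure_biUnion_finset_le G _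
    _ ≤ ∑ i ∈ G, ⨆ θ, μ (B n θ i) :=
      Finset.sum_le_sum fun i _ => le_iSup (fun θ => μ (B n θ i)) θ

theorem uniform_monotone_convergence_general
    {Ω Θ : Type*} [MeasurableSpace Ω] (P : Measure Ω)
    (X : ℕ → Θ → Set.Icc (0 : ℝ) 1 → Ω → ℝ)
    (f : Θ → Set.Icc (0 : ℝ) 1 → ℝ)
    (hXmono : ∀ n θ ω, Monotone fun t => X n θ t ω)
    (hfmono : ∀ θ, Monotone (f θ))
    (hequi : ∀ ε > (0 : ℝ), ∃ δ > (0 : ℝ), ∀ θ, ∀ s t : Set.Icc (0 : ℝ) 1,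
      dist s t ≤ δ → |f θ s - f θ t| < ε)
    (hpt : ∀ t, ∀ ε > (0 : ℝ),
      Tendsto (fun n => ⨆ θ, P {ω | ε < |X n θ t ω - f θ t|}) atTop (𝓝 0)) :
    ∀ ε > (0 : ℝ),
      Tendsto (fun n => ⨆ θ, P {ω | ε < ⨆ t, |X n θ t ω - f θ t|}) atTop (𝓝 0) := by
  intro ε hε
  obtain ⟨δ, hδ, hδε⟩ := hequi (ε / 2) (half_pos hε)
  obtain ⟨G, hG⟩ := exists_finset_bracket_Icc zero_le_one hδ
  have hbracket : ∀ θ t, ∃ s ∈ G, ∃ u ∈ G, s ≤ t ∧ t ≤ u ∧ f θ u - f θ s ≤ ε / 2 := by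
    intro θ t
    obtain ⟨s, hs, u, hu, hst, htu, hsu⟩ := hG t
    exact ⟨s, hs, u, hu, hst, htu, (le_abs_self _).trans (hδε θ u s hsu).le⟩
  refine tendsto_iSup_measure_of_subset_biUnion P G (fun s _ => hpt s (ε / 2) (half_pos hε))
    fun n θ ω hω => ?_
  by_contra hω'
  simp only [Set.mem_iUnion, Set.mem_ofPred_eq, not_exists, not_lt] at hω'
  have hsup := iSup_abs_sub_le_of_bracket (hXmono n θ ω) (hfmono θ) (hbracket θ) hω'
  exact (add_halves ε ▸ hsup).not_gt hω

/-- **Uniform convergence of monotone processes towards equicontinuous monotone limits.**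
If, for each `t ∈ [0,1]`, `X_n^θ(t) → f^θ(t)` uniformly in probability over `Θ`, the sample
paths of `X_n^θ` are nondecreasing, and `(f^θ)` is a uniformly equicontinuous family of
nondecreasing continuous functions, then the convergence holds uniformly in `t ∈ [0,1]`,
uniformly in probability over `Θ`. -/
theorem uniform_monotone_convergence
    {Ω Θ : Type*} [MeasurableSpace Ω] (P : Measure Ω) [IsProbabilityMeasure P] [Nonempty Θ]
    (X : ℕ → Θ → Set.Icc (0 : ℝ) 1 → Ω → ℝ)
    (f : Θ → Set.Icc (0 : ℝ) 1 → ℝ)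
    (hXmeas : ∀ n θ t, Measurable (X n θ t))
    (hXmono : ∀ n θ ω, Monotone fun t => X n θ t ω)
    (hfmono : ∀ θ, Monotone (f θ))
    (hfcont : ∀ θ, Continuous (f θ))
    (hequi : ∀ ε > (0 : ℝ), ∃ δ > (0 : ℝ), ∀ θ, ∀ s t : Set.Icc (0 : ℝ) 1,
      dist s t ≤ δ → |f θ s - f θ t| < ε)
    (hpt : ∀ t, ∀ ε > (0 : ℝ),
      Tendsto (fun n => ⨆ θ, P {ω | ε < |X n θ t ω - f θ t|}) atTop (𝓝 0)) :
    ∀ ε > (0 : ℝ),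
      Tendsto (fun n => ⨆ θ, P {ω | ε < ⨆ t, |X n θ t ω - f θ t|}) atTop (𝓝 0) :=
  uniform_monotone_convergence_general P X f hXmono hfmono hequi hpt
end
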